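/- arXiv:0906.5553 — 3 statements merged into one kernel-verified Lean document; each statement's English description precedes it below -/
import Mathlib

section
/- For every k ≥ 2 and n ≥ 0, the number of k-noncrossing RNA structures on [n] satisfies S_k(n) = Σ_{b=0}^{⌊n/2⌋} (−1)^b · C(n−b, b) · f_k^*(n−2b), where C denotes the binomial coefficient. -/
/-- The empty shape (Ferrers diagram with no squares). -/
def emptyShape : ℕ → ℕ := fun _ => 0

/-- `f : ℕ → ℕ` represents a shape (integer partition / Ferrers diagram), recording the
number of squares in each row (0-indexed): rows are weakly decreasing and eventually zero. -/
def IsShape (f : ℕ → ℕ) : Prop := (∀ i, f (i + 1) ≤ f i) ∧ ∃ N, f N = 0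

/-- The shape `f` has at most `r` (nonzero) rows. -/
def RowsLE (r : ℕ) (f : ℕ → ℕ) : Prop := f r = 0

/-- `mu` is obtained from `lam` by adding one square in row `j` (0-indexed). -/
def AddSquareAt (j : ℕ) (lam mu : ℕ → ℕ) : Prop :=
  mu j = lam j + 1 ∧ ∀ i, i ≠ j → mu i = lam i

/-- `mu` is obtained from `lam` by adding one square. -/
def AddSquare (lam mu : ℕ → ℕ) : Prop := ∃ j, AddSquareAt j lam mu

/-- `mu` and `lam` differ by exactly one square (added or removed). -/
def OscStep (lam mu : ℕ → ℕ) : Prop := AddSquare lam mu ∨ AddSquare mu lam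

/-- `mu` is obtained from `lam` by adding one square, removing one square, or doing nothing. -/
def StarStep (lam mu : ℕ → ℕ) : Prop := mu = lam ∨ OscStep lam mu

/-- `t` encodes a `*`-tableaux of shape `lam` and length `m`, all of whose shapes have at
most `k - 1` rows: `t 0 = ∅`, `t m = lam`, consecutive shapes differ by at most one square,
and the sequence is padded by `lam` from index `m` on (so that `t` is determined by its
values `t 0, …, t m`). -/
def IsStarTab (k : ℕ) (lam : ℕ → ℕ) (m : ℕ) (t : ℕ → ℕ → ℕ) : Prop :=
  t 0 = emptyShape ∧ (∀ i, m ≤ i → t i = lam) ∧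
  (∀ i, i < m → StarStep (t i) (t (i + 1))) ∧
  ∀ i, IsShape (t i) ∧ RowsLE (k - 1) (t i)

/-- `t` encodes an oscillating tableaux: a `*`-tableaux whose consecutive shapes differ. -/
def IsOscTab (k : ℕ) (lam : ℕ → ℕ) (m : ℕ) (t : ℕ → ℕ → ℕ) : Prop :=
  IsStarTab k lam m t ∧ ∀ i, i < m → t (i + 1) ≠ t i

/-- `O_k^*(lam, m)`: the number of `*`-tableaux of shape `lam` and length `m`, all of whose
shapes have at most `k - 1` rows. -/
noncomputable def Ostar (k : ℕ) (lam : ℕ → ℕ) (m : ℕ) : ℕ :=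
  Nat.card {t : ℕ → ℕ → ℕ // IsStarTab k lam m t}

/-- `O_k^0(lam, m)`: the number of oscillating tableaux of shape `lam` and length `m`, all of
whose shapes have at most `k - 1` rows. -/
noncomputable def Oosc (k : ℕ) (lam : ℕ → ℕ) (m : ℕ) : ℕ :=
  Nat.card {t : ℕ → ℕ → ℕ // IsOscTab k lam m t}

/-- A `(+□₁, −□₁)`-pair at position `i` of a tableaux of length `m`: a square is added in the
first row and immediately removed again. -/
def PairAt (m : ℕ) (t : ℕ → ℕ → ℕ) (i : ℕ) : Prop :=
  i + 2 ≤ m ∧ AddSquareAt 0 (t i) (t (i + 1)) ∧ t (i + 2) = t i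

/-- `Q_k^*(lam, m, j)`: the number of `*`-tableaux of shape `lam` and length `m` with at most
`k - 1` rows containing exactly `j` `(+□₁, −□₁)`-pairs. -/
noncomputable def Qstar (k : ℕ) (lam : ℕ → ℕ) (m j : ℕ) : ℕ :=
  Nat.card {t : ℕ → ℕ → ℕ //
    IsStarTab k lam m t ∧ Nat.card {i : ℕ // PairAt m t i} = j}

/-- `W_k^*(lam, m)`: the number of `*`-tableaux of shape `lam` and length `m` with at most
`k - 1` rows containing no `(+□₁, −□₁)`-pair. -/
noncomputable def Wstar (k : ℕ) (lam : ℕ → ℕ) (m : ℕ) : ℕ :=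
  Nat.card {t : ℕ → ℕ → ℕ // IsStarTab k lam m t ∧ ∀ i, ¬ PairAt m t i}

/-- `M` is a partial matching on `[n] = {1, …, n}`: a set of arcs `(i, j)` with
`1 ≤ i < j ≤ n` such that every vertex lies in at most one arc. -/
def IsPartialMatching (n : ℕ) (M : Finset (ℕ × ℕ)) : Prop :=
  (∀ p ∈ M, 1 ≤ p.1 ∧ p.1 < p.2 ∧ p.2 ≤ n) ∧
  ∀ p ∈ M, ∀ q ∈ M, p ≠ q → p.1 ≠ q.1 ∧ p.1 ≠ q.2 ∧ p.2 ≠ q.1 ∧ p.2 ≠ q.2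

/-- `M` contains a `k`-crossing: arcs `(i₁,j₁), …, (i_k,j_k)` with
`i₁ < ⋯ < i_k < j₁ < ⋯ < j_k`. -/
def HasKCrossing (k : ℕ) (M : Finset (ℕ × ℕ)) : Prop :=
  ∃ a : Fin k → ℕ × ℕ, (∀ i, a i ∈ M) ∧
    (∀ i j, i < j → (a i).1 < (a j).1) ∧
    (∀ i j, i < j → (a i).2 < (a j).2) ∧
    ∀ i j, (a i).1 < (a j).2

/-- `M` is a `k`-noncrossing partial matching on `[n]`. -/
def KNoncrossingPM (k n : ℕ) (M : Finset (ℕ × ℕ)) : Prop :=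
  IsPartialMatching n M ∧ ¬ HasKCrossing k M

/-- `f_k^*(n)`: the number of `k`-noncrossing partial matchings on `[n]`. -/
noncomputable def fstar (k n : ℕ) : ℕ :=
  Nat.card {M : Finset (ℕ × ℕ) // KNoncrossingPM k n M}

/-- `M` is a matching on `[n]`: a partial matching in which every vertex lies in an arc. -/
def IsMatching (n : ℕ) (M : Finset (ℕ × ℕ)) : Prop :=
  IsPartialMatching n M ∧ ∀ v, 1 ≤ v → v ≤ n → ∃ p ∈ M, p.1 = v ∨ p.2 = v

/-- `f_k(n)`: the number of `k`-noncrossing matchings on `[n]`. -/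
noncomputable def fmatch (k n : ℕ) : ℕ :=
  Nat.card {M : Finset (ℕ × ℕ) // IsMatching n M ∧ ¬ HasKCrossing k M}

/-- `M` is a `k`-noncrossing RNA structure on `[n]`: a `k`-noncrossing partial matching
without `1`-arcs `(i, i+1)`. -/
def IsRNA (k n : ℕ) (M : Finset (ℕ × ℕ)) : Prop :=
  KNoncrossingPM k n M ∧ ∀ i, (i, i + 1) ∉ M

/-- `S_k(n)`: the number of `k`-noncrossing RNA structures on `[n]`. -/
noncomputable def Snum (k n : ℕ) : ℕ :=
  Nat.card {M : Finset (ℕ × ℕ) // IsRNA k n M}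

/-- `F(n, h)`: the number of `±1`-sequences of length `n` with all partial sums nonnegative
and total sum `h` (lattice paths from `(0,0)` to `(n,h)` staying in the first quadrant). -/
noncomputable def Fpath (n h : ℕ) : ℕ :=
  Nat.card {s : Fin n → ℤ // (∀ i, s i = 1 ∨ s i = -1) ∧
    (∀ m : ℕ, 0 ≤ ∑ i ∈ Finset.univ.filter (fun i : Fin n => (i : ℕ) < m), s i) ∧
    (∑ i, s i) = (h : ℤ)}

/-- The two-row shape `(x₁, x₂)`. -/
def twoRowShape (x1 x2 : ℕ) : ℕ → ℕ :=
  fun i => if i = 0 then x1 else if i = 1 then x2 else 0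

/-- Add one square to row `h` (0-indexed) of `f`. -/
def addRow (h : ℕ) (f : ℕ → ℕ) : ℕ → ℕ := fun i => if i = h then f i + 1 else f i

/-- Remove one square from row `h` (0-indexed) of `f`. -/
def subRow (h : ℕ) (f : ℕ → ℕ) : ℕ → ℕ := fun i => if i = h then f i - 1 else f i

/-- `V_k^*(ν, m) = W_k^*(ν, m) − W_k^*(ν⁻, m−1)`, where `ν⁻` is `ν` with one square removed
from the first row, and the second term is `0` if `ν` has an empty first row (invalid `ν⁻`). -/
noncomputable def Vstar (k : ℕ) (nu : ℕ → ℕ) (m : ℕ) : ℤ :=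
  (Wstar k nu m : ℤ) - if 0 < nu 0 then (Wstar k (subRow 0 nu) (m - 1) : ℤ) else 0

/-- The hyperbolic Bessel function of the first kind of order `r` evaluated at `2x`, as a
formal power series: `I_r(2x) = Σ_{j ≥ max(0,−r)} x^{2j+r}/(j!·(r+j)!)`. -/
noncomputable def besselI (r : ℤ) : PowerSeries ℚ :=
  PowerSeries.mk fun n =>
    if r.natAbs ≤ n ∧ (n : ℤ) % 2 = r % 2 then
      (1 : ℚ) / (((((n : ℤ) - r) / 2).toNat.factorial * ((((n : ℤ) + r) / 2).toNat.factorial) : ℕ) : ℚ)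
    else 0

/-! Inclusion–exclusion over the set `B` of arcs `(i, i + 1)` that a `k`-noncrossing partial
matching on `[n]` is required to contain. If `B` has two consecutive elements these arcs overlap
and no matching qualifies. Otherwise, deleting the arcs together with their `2|B|` endpoints and
relabelling the remaining vertices in order is a bijection onto the `k`-noncrossing partial
matchings on `[n - 2|B|]`, since for `k ≥ 2` an arc `(i, i + 1)` is never part of a `k`-crossing.
Finally, `[n - 1]` has `C(n - b, b)` subsets of size `b` without two consecutive elements. -/

namespace RNAStructure

open Finset

def IsPartialMatchingOn (S : Finset ℕ) (M : Finset (ℕ × ℕ)) : Prop :=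
  (∀ p ∈ M, p.1 < p.2 ∧ p.1 ∈ S ∧ p.2 ∈ S) ∧
  ∀ p ∈ M, ∀ q ∈ M, p ≠ q → p.1 ≠ q.1 ∧ p.1 ≠ q.2 ∧ p.2 ≠ q.1 ∧ p.2 ≠ q.2

lemma isPartialMatching_iff {n : ℕ} {M : Finset (ℕ × ℕ)} :
    IsPartialMatching n M ↔ IsPartialMatchingOn (Icc 1 n) M := by
  refine and_congr (forall₂_congr fun p _ => ?_) Iff.rfl
  simp only [mem_Icc]
  omega

noncomputable def fstarOn (k : ℕ) (S : Finset ℕ) : ℕ :=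
  Nat.card {M : Finset (ℕ × ℕ) // IsPartialMatchingOn S M ∧ ¬ HasKCrossing k M}

lemma fstarOn_Icc (k n : ℕ) : fstarOn k (Icc 1 n) = fstar k n :=
  Nat.card_congr <| Equiv.subtypeEquivRight fun _ => and_congr_left' isPartialMatching_iff.symm

namespace IsPartialMatchingOn

variable {S T : Finset ℕ} {M N : Finset (ℕ × ℕ)}

lemma subset (hM : IsPartialMatchingOn S M) (hNM : N ⊆ M) : IsPartialMatchingOn S N :=
  ⟨fun p hp => hM.1 p (hNM hp), fun p hp q hq => hM.2 p (hNM hp) q (hNM hq)⟩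

lemma eq_of_mem_of_mem (hM : IsPartialMatchingOn S M) {p q : ℕ × ℕ} (hp : p ∈ M) (hq : q ∈ M)
    (h : p.1 = q.1 ∨ p.1 = q.2 ∨ p.2 = q.1 ∨ p.2 = q.2) : p = q := by
  by_contra hpq
  have := hM.2 p hp q hq hpq
  tauto

lemma union (hM : IsPartialMatchingOn S M) (hN : IsPartialMatchingOn T N) (hST : Disjoint S T) :
    IsPartialMatchingOn (S ∪ T) (M ∪ N) := by
  have hne {x y : ℕ} (hx : x ∈ S) (hy : y ∈ T) : x ≠ y := by
    rintro rfl
    exact disjoint_left.1 hST hx hy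
  refine ⟨fun p hp => ?_, fun p hp q hq hpq => ?_⟩
  · rcases mem_union.1 hp with hp | hp
    · obtain ⟨hlt, h1, h2⟩ := hM.1 p hp
      exact ⟨hlt, mem_union_left _ h1, mem_union_left _ h2⟩
    · obtain ⟨hlt, h1, h2⟩ := hN.1 p hp
      exact ⟨hlt, mem_union_right _ h1, mem_union_right _ h2⟩
  rcases mem_union.1 hp with hp | hp <;> rcases mem_union.1 hq with hq | hq
  · exact hM.2 p hp q hq hpq
  · obtain ⟨-, hp1, hp2⟩ := hM.1 p hp
    obtain ⟨-, hq1, hq2⟩ := hN.1 q hq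
    exact ⟨hne hp1 hq1, hne hp1 hq2, hne hp2 hq1, hne hp2 hq2⟩
  · obtain ⟨-, hp1, hp2⟩ := hN.1 p hp
    obtain ⟨-, hq1, hq2⟩ := hM.1 q hq
    exact ⟨(hne hq1 hp1).symm, (hne hq2 hp1).symm, (hne hq1 hp2).symm, (hne hq2 hp2).symm⟩
  · exact hN.2 p hp q hq hpq

end IsPartialMatchingOn

lemma HasKCrossing.mono {k : ℕ} {M N : Finset (ℕ × ℕ)} (h : HasKCrossing k M) (hMN : M ⊆ N) :
    HasKCrossing k N := by
  obtain ⟨a, ha, h1, h2, h3⟩ := h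
  exact ⟨a, fun i => hMN (ha i), h1, h2, h3⟩

/-- For `k ≥ 2` each arc of a `k`-crossing has another arc's endpoint strictly inside it, so
arcs `(i, i + 1)` never take part in one. -/
lemma HasKCrossing.of_union_of_forall_snd_eq {k : ℕ} {M N : Finset (ℕ × ℕ)} (hk : 2 ≤ k)
    (hN : ∀ p ∈ N, p.2 = p.1 + 1) (h : HasKCrossing k (M ∪ N)) : HasKCrossing k M := by
  obtain ⟨a, ha, h1, h2, h3⟩ := h
  refine ⟨a, fun i => (mem_union.1 (ha i)).resolve_right fun hi => ?_, h1, h2, h3⟩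
  have := hN _ hi
  have : Nontrivial (Fin k) := Fin.nontrivial_iff_two_le.2 hk
  obtain ⟨j, hj⟩ := exists_ne i
  rcases hj.lt_or_gt with hji | hij
  · have := h2 j i hji
    have := h3 i j
    omega
  · have := h1 i j hij
    have := h3 j i
    omega

def relabel (f : ℕ → ℕ) (M : Finset (ℕ × ℕ)) : Finset (ℕ × ℕ) := M.image (Prod.map f f)

section Relabel

variable {S T : Finset ℕ} {f g : ℕ → ℕ} {M : Finset (ℕ × ℕ)}

lemma IsPartialMatchingOn.relabel (hf : StrictMonoOn f S) (hfST : Set.MapsTo f S T)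
    (hM : IsPartialMatchingOn S M) : IsPartialMatchingOn T (relabel f M) := by
  have hinj := hf.injOn
  refine ⟨fun p' hp' => ?_, fun p' hp' q' hq' hpq => ?_⟩
  · obtain ⟨p, hp, rfl⟩ := mem_image.1 hp'
    obtain ⟨hlt, h1, h2⟩ := hM.1 p hp
    exact ⟨hf h1 h2 hlt, hfST h1, hfST h2⟩
  · obtain ⟨p, hp, rfl⟩ := mem_image.1 hp'
    obtain ⟨q, hq, rfl⟩ := mem_image.1 hq'
    obtain ⟨-, hp1, hp2⟩ := hM.1 p hp
    obtain ⟨-, hq1, hq2⟩ := hM.1 q hq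
    obtain ⟨d11, d12, d21, d22⟩ := hM.2 p hp q hq (by rintro rfl; exact hpq rfl)
    exact ⟨fun h => d11 (hinj hp1 hq1 h), fun h => d12 (hinj hp1 hq2 h),
      fun h => d21 (hinj hp2 hq1 h), fun h => d22 (hinj hp2 hq2 h)⟩

lemma HasKCrossing.relabel {k : ℕ} (hf : StrictMonoOn f S) (hMS : ∀ p ∈ M, p.1 ∈ S ∧ p.2 ∈ S)
    (h : HasKCrossing k M) : HasKCrossing k (relabel f M) := by
  obtain ⟨a, ha, h1, h2, h3⟩ := h
  refine ⟨fun i => Prod.map f f (a i), fun i => mem_image_of_mem _ (ha i), fun i j hij => ?_,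
    fun i j hij => ?_, fun i j => ?_⟩
  · exact hf (hMS _ (ha i)).1 (hMS _ (ha j)).1 (h1 i j hij)
  · exact hf (hMS _ (ha i)).2 (hMS _ (ha j)).2 (h2 i j hij)
  · exact hf (hMS _ (ha i)).1 (hMS _ (ha j)).2 (h3 i j)

lemma relabel_relabel (hgf : Set.LeftInvOn g f S) (hMS : ∀ p ∈ M, p.1 ∈ S ∧ p.2 ∈ S) :
    relabel g (relabel f M) = M := by
  rw [relabel, relabel, image_image]
  refine (image_congr fun p hp => ?_).trans image_id
  exact Prod.ext (hgf (hMS p hp).1) (hgf (hMS p hp).2)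

end Relabel

section OrderIso

variable {S T : Finset ℕ}

def extendByZero (e : S ≃o T) (v : ℕ) : ℕ := if h : v ∈ S then e ⟨v, h⟩ else 0

lemma extendByZero_of_mem (e : S ≃o T) {v : ℕ} (h : v ∈ S) : extendByZero e v = e ⟨v, h⟩ :=
  dif_pos h

lemma strictMonoOn_extendByZero (e : S ≃o T) : StrictMonoOn (extendByZero e) S := by
  intro v hv w hw hvw
  rw [extendByZero_of_mem e hv, extendByZero_of_mem e hw]
  exact e.strictMono (Subtype.mk_lt_mk.2 hvw)

lemma mapsTo_extendByZero (e : S ≃o T) : Set.MapsTo (extendByZero e) S T := by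
  intro v hv
  rw [extendByZero_of_mem e hv]
  exact (e _).2

lemma leftInvOn_extendByZero (e : S ≃o T) :
    Set.LeftInvOn (extendByZero e.symm) (extendByZero e) S := by
  intro v hv
  rw [extendByZero_of_mem e hv, extendByZero_of_mem e.symm (e _).2]
  simp

lemma relabel_extendByZero_mem {k : ℕ} (e : S ≃o T) {M : Finset (ℕ × ℕ)}
    (hM : IsPartialMatchingOn S M ∧ ¬ HasKCrossing k M) :
    IsPartialMatchingOn T (relabel (extendByZero e) M) ∧
      ¬ HasKCrossing k (relabel (extendByZero e) M) := by
  have hMS : ∀ p ∈ M, p.1 ∈ S ∧ p.2 ∈ S := fun p hp => (hM.1.1 p hp).2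
  have hM' := hM.1.relabel (strictMonoOn_extendByZero e) (mapsTo_extendByZero e)
  refine ⟨hM', fun h => hM.2 ?_⟩
  rw [← relabel_relabel (leftInvOn_extendByZero e) hMS]
  exact HasKCrossing.relabel (strictMonoOn_extendByZero e.symm) (fun p hp => (hM'.1 p hp).2) h

lemma fstarOn_congr (k : ℕ) (e : S ≃o T) : fstarOn k S = fstarOn k T :=
  Nat.card_congr
    { toFun M := ⟨_, relabel_extendByZero_mem e M.2⟩
      invFun M := ⟨_, relabel_extendByZero_mem e.symm M.2⟩
      left_inv M := Subtype.ext <|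
        relabel_relabel (leftInvOn_extendByZero e) fun p hp => (M.2.1.1 p hp).2
      right_inv M := Subtype.ext <|
        relabel_relabel (leftInvOn_extendByZero e.symm) fun p hp => (M.2.1.1 p hp).2 }

lemma fstarOn_eq_fstar_card (k : ℕ) (S : Finset ℕ) : fstarOn k S = fstar k #S := by
  rw [← fstarOn_Icc, fstarOn_congr k
    ((S.orderIsoOfFin rfl).symm.trans ((Icc 1 #S).orderIsoOfFin (by simp)))]

end OrderIso

lemma IsPartialMatchingOn.disjoint {S T : Finset ℕ} {M N : Finset (ℕ × ℕ)}
    (hM : IsPartialMatchingOn S M) (hN : IsPartialMatchingOn T N) (hST : Disjoint S T) :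
    Disjoint M N :=
  disjoint_left.2 fun p hpM hpN => disjoint_left.1 hST (hM.1 p hpM).2.1 (hN.1 p hpN).2.1

def oneArcs (B : Finset ℕ) : Finset (ℕ × ℕ) := B.image fun i => (i, i + 1)

def oneArcEndpoints (B : Finset ℕ) : Finset ℕ := B ∪ B.image (· + 1)

def NoConsecutive (B : Finset ℕ) : Prop := ∀ i ∈ B, i + 1 ∉ B

instance : DecidablePred NoConsecutive := fun B => inferInstanceAs (Decidable (∀ i ∈ B, i + 1 ∉ B))

variable {B : Finset ℕ}

lemma oneArcs_subset_iff {M : Finset (ℕ × ℕ)} : oneArcs B ⊆ M ↔ ∀ i ∈ B, (i, i + 1) ∈ M := by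
  simp [oneArcs, image_subset_iff]

lemma isPartialMatchingOn_oneArcs (hB : NoConsecutive B) :
    IsPartialMatchingOn (oneArcEndpoints B) (oneArcs B) := by
  refine ⟨fun p hp => ?_, fun p hp q hq hpq => ?_⟩
  · obtain ⟨i, hi, rfl⟩ := mem_image.1 hp
    simp [oneArcEndpoints, hi]
  · obtain ⟨i, hi, rfl⟩ := mem_image.1 hp
    obtain ⟨j, hj, rfl⟩ := mem_image.1 hq
    have hij : i ≠ j := by rintro rfl; exact hpq rfl
    refine ⟨hij, ?_, ?_, by simpa using hij⟩
    · rintro rfl; exact hB j hj hi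
    · rintro rfl; exact hB i hi hj

lemma card_oneArcEndpoints (hB : NoConsecutive B) : #(oneArcEndpoints B) = 2 * #B := by
  have hdisj : Disjoint B (B.image (· + 1)) := disjoint_left.2 fun i hi hi' => by
    obtain ⟨j, hj, rfl⟩ := mem_image.1 hi'
    exact hB j hj hi
  rw [oneArcEndpoints, card_union_of_disjoint hdisj, card_image_of_injective _ (add_left_injective 1),
    two_mul]

lemma oneArcEndpoints_subset_Icc {n : ℕ} (hB : B ⊆ Ico 1 n) : oneArcEndpoints B ⊆ Icc 1 n := by
  intro v hv
  simp only [oneArcEndpoints, mem_union, mem_image] at hv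
  rcases hv with hv | ⟨i, hi, rfl⟩
  · have := mem_Ico.1 (hB hv); simp only [mem_Icc]; omega
  · have := mem_Ico.1 (hB hi); simp only [mem_Icc]; omega

lemma IsPartialMatchingOn.sdiff_oneArcs {S : Finset ℕ} {M : Finset (ℕ × ℕ)}
    (hM : IsPartialMatchingOn S M) (hBM : oneArcs B ⊆ M) :
    IsPartialMatchingOn (S \ oneArcEndpoints B) (M \ oneArcs B) := by
  refine ⟨fun p hp => ?_, (hM.subset sdiff_subset).2⟩
  obtain ⟨hpM, hpB⟩ := mem_sdiff.1 hp
  obtain ⟨hlt, h1, h2⟩ := hM.1 p hpM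
  have hout {v : ℕ} (hv : v = p.1 ∨ v = p.2) : v ∉ oneArcEndpoints B := by
    intro hvB
    obtain ⟨i, hi, hvi⟩ : ∃ i ∈ B, v = i ∨ v = i + 1 := by
      simp only [oneArcEndpoints, mem_union, mem_image] at hvB
      rcases hvB with hvB | ⟨i, hi, rfl⟩
      exacts [⟨v, hvB, .inl rfl⟩, ⟨i, hi, .inr rfl⟩]
    have hiM : (i, i + 1) ∈ M := oneArcs_subset_iff.1 hBM i hi
    refine hpB ?_
    rw [hM.eq_of_mem_of_mem hpM hiM (by omega)]
    exact mem_image_of_mem _ hi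
  exact ⟨hlt, mem_sdiff.2 ⟨h1, hout (.inl rfl)⟩, mem_sdiff.2 ⟨h2, hout (.inr rfl)⟩⟩

def sdiffOneArcsEquiv {k : ℕ} {S : Finset ℕ} (hk : 2 ≤ k) (hB : NoConsecutive B)
    (hBS : oneArcEndpoints B ⊆ S) :
    {M // (IsPartialMatchingOn S M ∧ ¬ HasKCrossing k M) ∧ oneArcs B ⊆ M} ≃
      {M // IsPartialMatchingOn (S \ oneArcEndpoints B) M ∧ ¬ HasKCrossing k M} where
  toFun M := ⟨M.1 \ oneArcs B, M.2.1.1.sdiff_oneArcs M.2.2,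
    fun h => M.2.1.2 (HasKCrossing.mono h sdiff_subset)⟩
  invFun M := ⟨M.1 ∪ oneArcs B,
    ⟨by simpa [sdiff_union_of_subset hBS] using
        M.2.1.union (isPartialMatchingOn_oneArcs hB) sdiff_disjoint,
      fun h => M.2.2 (HasKCrossing.of_union_of_forall_snd_eq hk (by simp [oneArcs]) h)⟩,
    subset_union_right⟩
  left_inv M := Subtype.ext (sdiff_union_of_subset M.2.2)
  right_inv M := Subtype.ext <| union_sdiff_cancel_right <|
    M.2.1.disjoint (isPartialMatchingOn_oneArcs hB) sdiff_disjoint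

lemma card_containing_oneArcs {k n : ℕ} (hk : 2 ≤ k) (hB : NoConsecutive B) (hBn : B ⊆ Ico 1 n) :
    Nat.card {M // KNoncrossingPM k n M ∧ ∀ i ∈ B, (i, i + 1) ∈ M} = fstar k (n - 2 * #B) := by
  have hBS := oneArcEndpoints_subset_Icc hBn
  calc Nat.card {M // KNoncrossingPM k n M ∧ ∀ i ∈ B, (i, i + 1) ∈ M}
      = Nat.card {M // (IsPartialMatchingOn (Icc 1 n) M ∧ ¬ HasKCrossing k M) ∧ oneArcs B ⊆ M} :=
        Nat.card_congr <| Equiv.subtypeEquivRight fun M => by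
          rw [KNoncrossingPM, isPartialMatching_iff, oneArcs_subset_iff]
    _ = fstarOn k (Icc 1 n \ oneArcEndpoints B) := Nat.card_congr (sdiffOneArcsEquiv hk hB hBS)
    _ = fstar k (n - 2 * #B) := by
        rw [fstarOn_eq_fstar_card, card_sdiff_of_subset hBS, card_oneArcEndpoints hB, Nat.card_Icc,
          Nat.add_sub_cancel]

lemma card_containing_oneArcs_of_not_noConsecutive {k n : ℕ} (hB : ¬ NoConsecutive B) :
    Nat.card {M // KNoncrossingPM k n M ∧ ∀ i ∈ B, (i, i + 1) ∈ M} = 0 := by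
  simp only [NoConsecutive, not_forall, not_not] at hB
  obtain ⟨i, hi, hi'⟩ := hB
  have : IsEmpty {M // KNoncrossingPM k n M ∧ ∀ i ∈ B, (i, i + 1) ∈ M} :=
    ⟨fun ⟨_, hM, hBM⟩ => (hM.1.2 _ (hBM i hi) _ (hBM _ hi') (by simp)).2.2.1 rfl⟩
  exact Nat.card_of_isEmpty

lemma finite_kNoncrossingPM (k n : ℕ) : {M | KNoncrossingPM k n M}.Finite :=
  Set.Finite.subset (finite_toSet (Icc 1 n ×ˢ Icc 1 n).powerset) fun M hM =>
    mem_powerset.2 fun p hp => by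
      obtain ⟨h1, h2, h3⟩ := hM.1.1 p hp
      simp only [mem_product, mem_Icc]
      omega

lemma isRNA_iff {k n : ℕ} {M : Finset (ℕ × ℕ)} :
    IsRNA k n M ↔ KNoncrossingPM k n M ∧ ∀ i ∈ Ico 1 n, (i, i + 1) ∉ M := by
  refine and_congr_right fun hM => ⟨fun h i _ => h i, fun h i hi => h i ?_ hi⟩
  have := hM.1.1 _ hi
  simp only [mem_Ico]
  omega

lemma snum_eq_sum_powerset (k n : ℕ) :
    (Snum k n : ℤ) = ∑ B ∈ (Ico 1 n).powerset,
      (-1) ^ #B * (Nat.card {M // KNoncrossingPM k n M ∧ ∀ i ∈ B, (i, i + 1) ∈ M} : ℤ) := by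
  have : Finite {M // KNoncrossingPM k n M} := (finite_kNoncrossingPM k n).to_subtype
  let _ := Fintype.ofFinite {M // KNoncrossingPM k n M}
  have hcard (Q : Finset (ℕ × ℕ) → Prop) [DecidablePred Q] :
      Nat.card {M // KNoncrossingPM k n M ∧ Q M} = #{M : {M // KNoncrossingPM k n M} | Q M} :=
    (Nat.card_congr (Equiv.subtypeSubtypeEquivSubtypeInter _ _)).symm.trans
      (Nat.card_eq_fintype_card.trans (Fintype.card_subtype _))
  have hRNA : #{M : {M // KNoncrossingPM k n M} | ∀ i ∈ Ico 1 n, (i, i + 1) ∉ M.1} =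
      #((Ico 1 n).inf fun i => ({M | (i, i + 1) ∈ M.1} : Finset {M // KNoncrossingPM k n M})ᶜ) := by
    congr 1
    ext M
    simp [mem_inf]
  rw [Snum, Nat.card_congr (Equiv.subtypeEquivRight fun _ => isRNA_iff), hcard, hRNA,
    inclusion_exclusion_card_inf_compl]
  refine sum_congr rfl fun B _ => ?_
  rw [hcard]
  congr 3
  ext M
  simp [mem_inf]

lemma card_noConsecutive_succ_succ (n b : ℕ) :
    #{B ∈ (Ico 1 (n + 2)).powersetCard (b + 1) | NoConsecutive B} =
      #{B ∈ (Ico 1 (n + 1)).powersetCard (b + 1) | NoConsecutive B} +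
        #{B ∈ (Ico 1 n).powersetCard b | NoConsecutive B} := by
  have hn : n + 1 ∉ Ico 1 (n + 1) := by simp
  have hnotMem {B : Finset ℕ} (hB : B ∈ (Ico 1 (n + 1)).powersetCard b) : n + 1 ∉ B :=
    fun h => hn ((mem_powersetCard.1 hB).1 h)
  have hI : Ico 1 (n + 2) = insert (n + 1) (Ico 1 (n + 1)) :=
    (insert_Ico_right_eq_Ico_add_one (by omega)).symm
  rw [hI, powersetCard_succ_insert hn,
    filter_union, card_union_of_disjoint, filter_image, card_image_of_injOn]
  · congr 2
    ext B
    simp only [mem_filter, mem_powersetCard, and_assoc]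
    constructor
    · rintro ⟨hB, hb, hNC⟩
      have hnB : n ∉ B := fun h => hNC n (mem_insert_of_mem h) (mem_insert_self _ _)
      refine ⟨fun i hi => ?_, hb, fun i hi h => hNC i (mem_insert_of_mem hi) (mem_insert_of_mem h)⟩
      have := mem_Ico.1 (hB hi)
      have : i ≠ n := by rintro rfl; exact hnB hi
      exact mem_Ico.2 (by omega)
    · rintro ⟨hB, hb, hNC⟩
      refine ⟨hB.trans (Ico_subset_Ico_right (by omega)), hb, fun i hi hi' => ?_⟩
      rcases mem_insert.1 hi with rfl | hi <;> rcases mem_insert.1 hi' with h | h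
      · omega
      · have := mem_Ico.1 (hB h); omega
      · have := mem_Ico.1 (hB hi); omega
      · exact hNC i hi h
  · intro B hB C hC h
    rw [← erase_insert (hnotMem (mem_filter.1 hB).1), h, erase_insert (hnotMem (mem_filter.1 hC).1)]
  · refine disjoint_left.2 fun B hB hB' => ?_
    obtain ⟨C, hC, rfl⟩ := mem_image.1 (mem_filter.1 hB').1
    exact hn ((mem_powersetCard.1 (mem_filter.1 hB).1).1 (mem_insert_self _ _))

lemma card_noConsecutive_powersetCard : ∀ n b : ℕ,
    #{B ∈ (Ico 1 n).powersetCard b | NoConsecutive B} = (n - b).choose b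
  | 0, b | 1, b => by cases b <;> simp [NoConsecutive, filter_singleton]
  | n + 2, 0 => by simp [NoConsecutive, filter_singleton]
  | n + 2, b + 1 => by
    rw [card_noConsecutive_succ_succ, card_noConsecutive_powersetCard (n + 1) (b + 1),
      card_noConsecutive_powersetCard n b]
    rcases le_or_gt b n with h | h
    · rw [show n + 2 - (b + 1) = n - b + 1 by omega, show n + 1 - (b + 1) = n - b by omega,
        Nat.choose_succ_succ', add_comm]
    · rw [show n + 2 - (b + 1) = 0 by omega, show n + 1 - (b + 1) = 0 by omega,
        show n - b = 0 by omega, Nat.choose_eq_zero_of_lt (by omega : 0 < b + 1),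
        Nat.choose_eq_zero_of_lt (by omega : 0 < b)]

lemma sum_powerset_noConsecutive {R : Type*} [AddCommMonoid R] (n : ℕ) (g : ℕ → R) :
    ∑ B ∈ (Ico 1 n).powerset with NoConsecutive B, g #B =
      ∑ b ∈ range (n / 2 + 1), (n - b).choose b • g b := by
  rw [← sum_fiberwise_of_maps_to (g := card) (t := range (n / 2 + 1))]
  · refine sum_congr rfl fun b _ => ?_
    rw [sum_congr rfl fun B hB => by rw [(mem_filter.1 hB).2], sum_const,
      ← card_noConsecutive_powersetCard, powersetCard_eq_filter, filter_filter, filter_filter]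
    simp only [and_comm]
  · intro B hB
    obtain ⟨hB, hNC⟩ := mem_filter.1 hB
    have := card_le_card (oneArcEndpoints_subset_Icc (mem_powerset.1 hB))
    rw [card_oneArcEndpoints hNC, Nat.card_Icc] at this
    exact mem_range.2 (by omega)

end RNAStructure

/-- `S_k(n) = Σ_{b=0}^{⌊n/2⌋} (−1)^b · C(n−b, b) · f_k^*(n−2b)`. -/
theorem Snum_eq_alt_sum (k n : ℕ) (hk : 2 ≤ k) :
    (Snum k n : ℤ) = ∑ b ∈ Finset.range (n / 2 + 1),
      (-1 : ℤ) ^ b * ((n - b).choose b : ℤ) * (fstar k (n - 2 * b) : ℤ) := by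
  open RNAStructure Finset in
  calc (Snum k n : ℤ)
      = ∑ B ∈ (Ico 1 n).powerset with NoConsecutive B, (-1) ^ #B * (fstar k (n - 2 * #B) : ℤ) := by
        rw [snum_eq_sum_powerset, sum_filter]
        refine sum_congr rfl fun B hB => ?_
        split_ifs with hB'
        · rw [card_containing_oneArcs hk hB' (mem_powerset.1 hB)]
        · rw [card_containing_oneArcs_of_not_noConsecutive hB', Nat.cast_zero, mul_zero]
    _ = _ := (sum_powerset_noConsecutive n fun b => (-1) ^ b * (fstar k (n - 2 * b) : ℤ)).trans <|
        sum_congr rfl fun b _ => by rw [nsmul_eq_mul]; ring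
end

section
/- Let k ≥ 2 and let λ be a shape with at most k−1 rows. Then for every m ≥ 0, W_k^*(λ, m) = Σ_{b=0}^{⌊m/2⌋} (−1)^b · C(m−b, b) · O_k^*(λ, m−2b), where C denotes the binomial coefficient. -/
/-!
Removing the last step of a `*`-tableau of length `n + 1` ending at `λ` leaves one of length `n`
ending at a shape `μ` from which one `*`-step leads to `λ`; hence `O(λ, n + 1) = ∑_μ O(μ, n)`.
Appending the step `μ → λ` to a pair-free tableau of length `n + 1` ending at `μ` creates a
`(+□₁, −□₁)`-pair exactly when its last step added a first-row square to `λ`, and those tableaux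
are the pair-free tableaux of length `n` ending at `λ` followed by that step. Hence
`W(λ, n + 2) + W(λ, n) = ∑_μ W(μ, n + 1)`. This is the three-term recurrence of Chebyshev
polynomials of the second kind, whose coefficients are the alternating binomial sums; with
`W = O` in lengths `0` and `1` the formula follows by induction.
-/

open Finset

section AltChooseSum

variable {R : Type*} [CommRing R]

/-- `altChooseSum (x ^ ·) m = U_m(x / 2)`, the Chebyshev polynomial of the second kind. -/
def altChooseSum (A : ℕ → R) (m : ℕ) : R :=
  ∑ b ∈ range (m / 2 + 1), (-1) ^ b * ((m - b).choose b : R) * A (m - 2 * b)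

lemma altChooseSum_eq_sum_range (A : ℕ → R) {m N : ℕ} (h : m / 2 < N) :
    altChooseSum A m = ∑ b ∈ range N, (-1) ^ b * ((m - b).choose b : R) * A (m - 2 * b) := by
  refine sum_subset (range_subset_range.2 h) fun b _ hb => ?_
  rw [mem_range, not_lt] at hb
  rw [Nat.choose_eq_zero_of_lt (by omega), Nat.cast_zero, mul_zero, zero_mul]

lemma altChooseSum_zero (A : ℕ → R) : altChooseSum A 0 = A 0 := by
  simp [altChooseSum]

lemma altChooseSum_one (A : ℕ → R) : altChooseSum A 1 = A 1 := by
  simp [altChooseSum]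

lemma altChooseSum_add_two (A : ℕ → R) (n : ℕ) :
    altChooseSum A (n + 2) =
      altChooseSum (fun j => A (j + 1)) (n + 1) - altChooseSum A n := by
  rw [altChooseSum_eq_sum_range A (N := n + 2) (by omega),
    altChooseSum_eq_sum_range _ (N := n + 2) (by omega),
    altChooseSum_eq_sum_range A (N := n + 1) (by omega),
    sum_range_succ' _ (n + 1), sum_range_succ' _ (n + 1), add_sub_right_comm, ← sum_sub_distrib]
  congr 1
  · refine sum_congr rfl fun c hc => ?_
    rw [mem_range] at hc
    have hshift : ((n - c).choose (c + 1) : R) * A (n - 2 * c) =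
        (n - c).choose (c + 1) * A (n + 1 - 2 * (c + 1) + 1) := by
      rcases lt_or_ge (2 * c) n with h | h
      · rw [show n + 1 - 2 * (c + 1) + 1 = n - 2 * c by omega]
      · rw [Nat.choose_eq_zero_of_lt (by omega), Nat.cast_zero, zero_mul, zero_mul]
    rw [show n + 2 - (c + 1) = n - c + 1 by omega, show n + 1 - (c + 1) = n - c by omega,
      show n + 2 - 2 * (c + 1) = n - 2 * c by omega, Nat.choose_succ_succ', Nat.cast_add,
      pow_succ]
    linear_combination (-(-1) ^ c) * hshift

lemma altChooseSum_sum {ι : Type*} (s : Finset ι) (f : ι → ℕ → R) (m : ℕ) :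
    altChooseSum (fun j => ∑ i ∈ s, f i j) m = ∑ i ∈ s, altChooseSum (f i) m := by
  simp only [altChooseSum, mul_sum]
  exact sum_comm

theorem eq_altChooseSum_of_recurrence {α : Type*} (P : α → Finset α) (O W : ℕ → α → R)
    (hO : ∀ n a, O (n + 1) a = ∑ b ∈ P a, O n b)
    (hW : ∀ n a, W (n + 2) a + W n a = ∑ b ∈ P a, W (n + 1) b)
    (h0 : ∀ a, W 0 a = O 0 a) (h1 : ∀ a, W 1 a = O 1 a) (m : ℕ) (a : α) :
    W m a = altChooseSum (O · a) m := by
  induction m using Nat.twoStepInduction generalizing a with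
  | zero => rw [h0, altChooseSum_zero]
  | one => rw [h1, altChooseSum_one]
  | more n ihn ihn1 =>
    calc W (n + 2) a = ∑ b ∈ P a, W (n + 1) b - W n a := eq_sub_of_add_eq (hW n a)
      _ = altChooseSum (fun j => ∑ b ∈ P a, O j b) (n + 1) - altChooseSum (O · a) n := by
        simp only [ihn, ihn1, altChooseSum_sum]
      _ = altChooseSum (O · a) (n + 2) := by
        simp only [← hO, altChooseSum_add_two]

end AltChooseSum

lemma IsShape.antitone {f : ℕ → ℕ} (hf : IsShape f) : Antitone f :=
  antitone_nat_of_succ_le hf.1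

lemma IsShape.eq_zero_of_rowsLE {r j : ℕ} {f : ℕ → ℕ} (hf : IsShape f) (hr : RowsLE r f)
    (hj : r ≤ j) : f j = 0 :=
  Nat.le_zero.mp (hr ▸ hf.antitone hj)

lemma StarStep.le_add_one {lam mu : ℕ → ℕ} (h : StarStep mu lam) (i : ℕ) :
    mu i ≤ lam i + 1 := by
  rcases h with rfl | ⟨j, hj, hne⟩ | ⟨j, hj, hne⟩
  · omega
  · rcases eq_or_ne i j with rfl | hij <;> grind
  · rcases eq_or_ne i j with rfl | hij <;> grind

lemma addSquareAt_iff_eq_addRow {j : ℕ} {lam mu : ℕ → ℕ} :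
    AddSquareAt j lam mu ↔ mu = addRow j lam := by
  refine ⟨fun ⟨hj, hne⟩ => funext fun i => ?_, ?_⟩
  · by_cases hi : i = j
    · subst hi; simp [addRow, hj]
    · simp [addRow, hi, hne i hi]
  · rintro rfl
    exact ⟨by simp [addRow], fun i hi => by simp [addRow, hi]⟩

lemma IsShape.addRow_zero {lam : ℕ → ℕ} (h : IsShape lam) : IsShape (addRow 0 lam) := by
  obtain ⟨hdec, N, hN⟩ := h
  refine ⟨fun i => ?_, N + 1, ?_⟩
  · rcases Nat.eq_zero_or_pos i with rfl | hi
    · simpa [addRow] using Nat.le_succ_of_le (hdec 0)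
    · simpa [addRow, hi.ne'] using hdec i
  · simp only [addRow, if_neg N.succ_ne_zero]
    exact Nat.le_zero.mp (hN ▸ hdec N)

lemma RowsLE.addRow_zero {r : ℕ} {lam : ℕ → ℕ} (h : RowsLE r lam) (hr : r ≠ 0) :
    RowsLE r (addRow 0 lam) := by
  simpa [RowsLE, addRow, hr] using h

abbrev BoundedShape (k : ℕ) := {lam : ℕ → ℕ // IsShape lam ∧ RowsLE (k - 1) lam}

section Predecessors

variable {k : ℕ}

lemma finite_setOf_starStep (lam : ℕ → ℕ) :
    {mu : BoundedShape k | StarStep mu.1 lam}.Finite := by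
  refine Set.finite_coe_iff.mp (Finite.of_injective
    (fun mu (i : Fin (k - 1)) => (⟨mu.1.1 i, ?_⟩ : Fin (lam 0 + 2))) fun mu nu h => ?_)
  · have := mu.1.2.1.antitone (Nat.zero_le i)
    have := mu.2.le_add_one 0
    omega
  · refine Subtype.ext (Subtype.ext (funext fun j => ?_))
    by_cases hj : j < k - 1
    · exact congrArg Fin.val (congrFun h ⟨j, hj⟩)
    · rw [mu.1.2.1.eq_zero_of_rowsLE mu.1.2.2 (not_lt.mp hj),
        nu.1.2.1.eq_zero_of_rowsLE nu.1.2.2 (not_lt.mp hj)]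

noncomputable def starPreds (k : ℕ) (lam : ℕ → ℕ) : Finset (BoundedShape k) :=
  (finite_setOf_starStep lam).toFinset

@[simp]
lemma mem_starPreds {lam : ℕ → ℕ} {mu : BoundedShape k} :
    mu ∈ starPreds k lam ↔ StarStep mu.1 lam :=
  Set.Finite.mem_toFinset _

end Predecessors

section Tableaux

variable {k n : ℕ} {lam mu : ℕ → ℕ} {s t : ℕ → ℕ → ℕ}

/-- Truncating `t` to length `n` is `extendTab n (t n) t`. -/
def extendTab (n : ℕ) (lam : ℕ → ℕ) (s : ℕ → ℕ → ℕ) : ℕ → ℕ → ℕ :=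
  fun i => if i ≤ n then s i else lam

lemma extendTab_of_le {i : ℕ} (h : i ≤ n) : extendTab n lam s i = s i := if_pos h

lemma extendTab_of_lt {i : ℕ} (h : n < i) : extendTab n lam s i = lam := if_neg (by omega)

lemma extendTab_extendTab : extendTab n lam (extendTab n mu s) = extendTab n lam s := by
  funext i
  by_cases h : i ≤ n <;> simp [extendTab, h]

lemma extendTab_eq_self (h : ∀ i, n < i → t i = lam) : extendTab n lam t = t := by
  funext i
  by_cases hi : i ≤ n
  · exact extendTab_of_le hi
  · rw [extendTab_of_lt (by omega), h i (by omega)]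

lemma IsStarTab.extend (hs : IsStarTab k mu n s) (hlam : IsShape lam)
    (hrow : RowsLE (k - 1) lam) (hstep : StarStep mu lam) :
    IsStarTab k lam (n + 1) (extendTab n lam s) := by
  refine ⟨by rw [extendTab_of_le n.zero_le, hs.1], fun i hi => extendTab_of_lt (by omega),
    fun i hi => ?_, fun i => ?_⟩
  · rw [extendTab_of_le (by omega : i ≤ n)]
    rcases Nat.lt_or_ge i n with h | h
    · rw [extendTab_of_le h]; exact hs.2.2.1 i h
    · rw [extendTab_of_lt (by omega), hs.2.1 i h]; exact hstep
  · by_cases hi : i ≤ n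
    · rw [extendTab_of_le hi]; exact hs.2.2.2 i
    · rw [extendTab_of_lt (by omega)]; exact ⟨hlam, hrow⟩

lemma IsStarTab.truncate (ht : IsStarTab k lam (n + 1) t) :
    IsStarTab k (t n) n (extendTab n (t n) t) := by
  refine ⟨by rw [extendTab_of_le n.zero_le, ht.1], fun i hi => ?_, fun i hi => ?_, fun i => ?_⟩
  · rcases hi.eq_or_lt with rfl | hi
    · exact extendTab_of_le le_rfl
    · exact extendTab_of_lt hi
  · rw [extendTab_of_le hi.le, extendTab_of_le hi]; exact ht.2.2.1 i (by omega)
  · by_cases hi : i ≤ n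
    · rw [extendTab_of_le hi]; exact ht.2.2.2 i
    · rw [extendTab_of_lt (by omega)]; exact ht.2.2.2 n

lemma IsStarTab.starStep_last (ht : IsStarTab k lam (n + 1) t) : StarStep (t n) lam :=
  ht.2.1 (n + 1) le_rfl ▸ ht.2.2.1 n n.lt_succ_self

lemma IsStarTab.extendTab_truncate (ht : IsStarTab k lam (n + 1) t) :
    extendTab n lam (extendTab n (t n) t) = t := by
  rw [extendTab_extendTab, extendTab_eq_self fun i hi => ht.2.1 i hi]

lemma IsStarTab.extendTab_self (hs : IsStarTab k mu n s) : extendTab n (s n) s = s :=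
  extendTab_eq_self fun i hi => (hs.2.1 i hi.le).trans (hs.2.1 n le_rfl).symm

lemma finite_setOf_isStarTab (lam : ℕ → ℕ) (n : ℕ) : {t | IsStarTab k lam n t}.Finite := by
  induction n generalizing lam with
  | zero =>
    exact Set.Subsingleton.finite fun t ht s hs =>
      funext fun i => (ht.2.1 i i.zero_le).trans (hs.2.1 i i.zero_le).symm
  | succ n ih =>
    refine (((starPreds k lam).finite_toSet.biUnion fun mu _ => ih mu).image
      (extendTab n lam)).subset fun t ht => ⟨extendTab n (t n) t, ?_, ht.extendTab_truncate⟩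
    exact Set.mem_biUnion (x := (⟨t n, ht.2.2.2 n⟩ : BoundedShape k))
      (mem_starPreds.2 ht.starStep_last) ht.truncate

instance (lam : ℕ → ℕ) (n : ℕ) (P : (ℕ → ℕ → ℕ) → Prop) :
    Finite {t // IsStarTab k lam n t ∧ P t} :=
  ((finite_setOf_isStarTab lam n).subset fun _ h => h.1).to_subtype

lemma card_isStarTab_succ (lam : BoundedShape k) (n : ℕ) (P : (ℕ → ℕ → ℕ) → Prop) :
    Nat.card {t // IsStarTab k lam (n + 1) t ∧ P t} =
      ∑ mu ∈ starPreds k lam, Nat.card {s // IsStarTab k mu n s ∧ P (extendTab n lam s)} := by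
  rw [← sum_coe_sort, ← Nat.card_sigma]
  refine Nat.card_congr
    { toFun := fun t => ⟨⟨⟨t.1 n, t.2.1.2.2.2 n⟩, mem_starPreds.2 t.2.1.starStep_last⟩,
        extendTab n (t.1 n) t.1, t.2.1.truncate, by rw [t.2.1.extendTab_truncate]; exact t.2.2⟩
      invFun := fun p => ⟨extendTab n lam p.2.1,
        p.2.2.1.extend lam.2.1 lam.2.2 (mem_starPreds.1 p.1.2), p.2.2.2⟩
      left_inv := fun t => Subtype.ext t.2.1.extendTab_truncate
      right_inv := fun ⟨mu, s, hs⟩ => ?_ }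
  have hlast : extendTab n lam s n = mu.1.1 := (extendTab_of_le le_rfl).trans (hs.1.2.1 n le_rfl)
  refine Sigma.subtype_ext (Subtype.ext (Subtype.ext hlast)) ?_
  simp only [extendTab_extendTab, extendTab_of_le le_rfl, hs.1.extendTab_self]

end Tableaux

section Recurrences

variable {k : ℕ}

lemma ostar_succ (lam : BoundedShape k) (n : ℕ) :
    Ostar k lam (n + 1) = ∑ mu ∈ starPreds k lam, Ostar k mu n := by
  simpa only [Ostar, and_true] using card_isStarTab_succ lam n fun _ => True

lemma wstar_eq_ostar_of_le_one {lam : ℕ → ℕ} {m : ℕ} (hm : m ≤ 1) :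
    Wstar k lam m = Ostar k lam m :=
  Nat.card_congr <| Equiv.subtypeEquivRight fun _ =>
    and_iff_left fun i hi => by have := hi.1; omega

lemma pairAt_extendTab_iff {n i : ℕ} {lam : ℕ → ℕ} {s : ℕ → ℕ → ℕ} :
    PairAt (n + 1) (extendTab n lam s) i ↔
      PairAt n s i ∨ i + 1 = n ∧ AddSquareAt 0 (s i) (s n) ∧ lam = s i := by
  rcases lt_trichotomy (i + 1) n with h | rfl | h
  · simp [PairAt, extendTab_of_le (by omega : i ≤ n), extendTab_of_le (by omega : i + 1 ≤ n),
      extendTab_of_le (by omega : i + 2 ≤ n), show i + 2 ≤ n by omega, show i < n by omega, h.ne]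
  · simp [PairAt, extendTab_of_le (by omega : i ≤ i + 1), extendTab_of_le le_rfl,
      extendTab_of_lt (by omega : i + 1 < i + 2), eq_comm]
  · simp [PairAt, show ¬i + 2 ≤ n + 1 by omega, show ¬i + 2 ≤ n by omega, h.ne']

lemma pairFree_extendTab_iff {n : ℕ} {lam : ℕ → ℕ} {s : ℕ → ℕ → ℕ} :
    (∀ i, ¬PairAt (n + 1) (extendTab n lam s) i) ↔
      (∀ i, ¬PairAt n s i) ∧ ∀ i, i + 1 = n → ¬(AddSquareAt 0 (s i) (s n) ∧ lam = s i) := by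
  simp only [pairAt_extendTab_iff, not_or, forall_and, not_and]

lemma card_and_not_add_card_and {α : Type*} (p q : α → Prop) [Finite {x // p x}] :
    Nat.card {x // p x ∧ ¬q x} + Nat.card {x // p x ∧ q x} = Nat.card {x // p x} := by
  classical
  rw [← Nat.card_congr (Equiv.subtypeSubtypeEquivSubtypeInter p fun x => ¬q x),
    ← Nat.card_congr (Equiv.subtypeSubtypeEquivSubtypeInter p q), add_comm, ← Nat.card_sum]
  exact Nat.card_congr (Equiv.sumCompl fun x : {x // p x} => q x)

lemma wstar_add_two_eq_sum (lam : BoundedShape k) (m : ℕ) :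
    Wstar k lam (m + 2) = ∑ mu ∈ starPreds k lam,
      Nat.card {s // (IsStarTab k mu (m + 1) s ∧ ∀ i, ¬PairAt (m + 1) s i) ∧
        ¬(AddSquareAt 0 (s m) (s (m + 1)) ∧ lam = s m)} := by
  rw [Wstar, card_isStarTab_succ]
  simp only [pairFree_extendTab_iff, Nat.add_right_cancel_iff, forall_eq, and_assoc]

/-- The tableaux counted here end by adding a first-row square to `lam`, so that a further step
back to `lam` closes a `(+□₁, −□₁)`-pair. -/
lemma card_pairFree_closing_eq_wstar {lam : ℕ → ℕ} (hlam : IsShape (addRow 0 lam))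
    (hrow : RowsLE (k - 1) (addRow 0 lam)) (m : ℕ) :
    Nat.card {s // (IsStarTab k (addRow 0 lam) (m + 1) s ∧ ∀ i, ¬PairAt (m + 1) s i) ∧
      (AddSquareAt 0 (s m) (s (m + 1)) ∧ lam = s m)} = Wstar k lam m := by
  refine Nat.card_congr
    { toFun := fun s => ⟨extendTab m lam s.1, ?_⟩
      invFun := fun s => ⟨extendTab m (addRow 0 lam) s.1, ?_⟩
      left_inv := fun s => Subtype.ext ?_
      right_inv := fun s => Subtype.ext ?_ }
  · obtain ⟨s, ⟨hs, hfree⟩, -, hlast⟩ := s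
    have htrunc := hs.truncate
    have hext := hs.extendTab_truncate
    rw [← hlast] at htrunc hext
    rw [← hext, pairFree_extendTab_iff] at hfree
    exact ⟨htrunc, hfree.1⟩
  · obtain ⟨s, hs, hfree⟩ := s
    dsimp only
    have hlast : s m = lam := hs.2.1 m le_rfl
    refine ⟨⟨hs.extend hlam hrow (Or.inr (Or.inl ⟨0, addSquareAt_iff_eq_addRow.2 rfl⟩)),
      pairFree_extendTab_iff.2 ⟨hfree, fun i _ ⟨hadd, hplus⟩ => ?_⟩⟩, ?_⟩
    · have h0 := congrFun hplus 0
      rw [hlast] at hadd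
      have h1 := hadd.1
      simp only [addRow, if_pos] at h0
      omega
    · rw [extendTab_of_le le_rfl, extendTab_of_lt m.lt_succ_self, hlast,
        addSquareAt_iff_eq_addRow]
      exact ⟨rfl, rfl⟩
  · obtain ⟨s, ⟨hs, -⟩, -⟩ := s
    dsimp only
    rw [extendTab_extendTab, extendTab_eq_self fun i hi => hs.2.1 i hi]
  · obtain ⟨s, hs, -⟩ := s
    dsimp only
    rw [extendTab_extendTab, extendTab_eq_self fun i hi => hs.2.1 i hi.le]

lemma sum_card_pairFree_closing_eq_wstar (hk : 2 ≤ k) (lam : BoundedShape k) (m : ℕ) :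
    ∑ mu ∈ starPreds k lam,
      Nat.card {s // (IsStarTab k mu (m + 1) s ∧ ∀ i, ¬PairAt (m + 1) s i) ∧
        (AddSquareAt 0 (s m) (s (m + 1)) ∧ lam = s m)} = Wstar k lam m := by
  have hlam := lam.2.1.addRow_zero
  have hrow := lam.2.2.addRow_zero (by omega)
  rw [sum_eq_single_of_mem ⟨addRow 0 lam, hlam, hrow⟩
    (mem_starPreds.2 (Or.inr (Or.inr ⟨0, addSquareAt_iff_eq_addRow.2 rfl⟩))) fun mu _ hne => ?_]
  · exact card_pairFree_closing_eq_wstar hlam hrow m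
  · refine @Nat.card_of_isEmpty _ ⟨fun ⟨s, ⟨hs, _⟩, hadd, hlast⟩ => hne (Subtype.ext ?_)⟩
    rw [← hs.2.1 (m + 1) le_rfl, addSquareAt_iff_eq_addRow.1 hadd, ← hlast]

lemma wstar_add_two_add_wstar (hk : 2 ≤ k) (lam : BoundedShape k) (m : ℕ) :
    Wstar k lam (m + 2) + Wstar k lam m = ∑ mu ∈ starPreds k lam, Wstar k mu (m + 1) := by
  rw [wstar_add_two_eq_sum, ← sum_card_pairFree_closing_eq_wstar hk, ← sum_add_distrib]
  exact sum_congr rfl fun mu _ => card_and_not_add_card_and _ _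

end Recurrences

/-- `W_k^*(λ, m) = Σ_{b=0}^{⌊m/2⌋} (−1)^b · C(m−b, b) · O_k^*(λ, m−2b)`. -/
theorem Wstar_eq_alt_sum (k : ℕ) (hk : 2 ≤ k) (lam : ℕ → ℕ) (hlam : IsShape lam)
    (hrow : RowsLE (k - 1) lam) (m : ℕ) :
    (Wstar k lam m : ℤ) = ∑ b ∈ Finset.range (m / 2 + 1),
      (-1 : ℤ) ^ b * ((m - b).choose b : ℤ) * (Ostar k lam (m - 2 * b) : ℤ) :=
  eq_altChooseSum_of_recurrence (fun nu : BoundedShape k => starPreds k nu)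
    (fun n nu => (Ostar k nu n : ℤ)) (fun n nu => (Wstar k nu n : ℤ))
    (fun n nu => mod_cast ostar_succ nu n)
    (fun n nu => mod_cast wstar_add_two_add_wstar hk nu n)
    (fun _ => mod_cast wstar_eq_ostar_of_le_one zero_le_one)
    (fun _ => mod_cast wstar_eq_ostar_of_le_one le_rfl) m ⟨lam, hlam, hrow⟩
end

section
/- Let k ≥ 2, let λ be a shape with at most k−1 rows, and let m, b ≥ 0 with 2b ≤ m. Then Σ_{j ≥ b} C(j, b) · Q_k^*(λ, m, j) = C(m−b, b) · O_k^*(λ, m−2b), where C denotes the binomial coefficient. -/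
namespace StarAux
open Finset
open scoped Classical

/-- number of elements of `S` less than `i`. -/
noncomputable def clt (S : Finset ℕ) (i : ℕ) : ℕ := (S.filter (· < i)).card

/-- contracted position of a pair starting at `s`. -/
noncomputable def qf (S : Finset ℕ) (s : ℕ) : ℕ := s - 2 * clt S s

/-- expanded time of contracted time `n`. -/
noncomputable def θf (S : Finset ℕ) (n : ℕ) : ℕ :=
  n + 2 * (S.filter (fun s => qf S s < n)).card

def Sparse (S : Finset ℕ) : Prop := ∀ s ∈ S, s + 1 ∉ S

theorem clt_mono (S : Finset ℕ) {i j : ℕ} (h : i ≤ j) : clt S i ≤ clt S j := by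
  apply card_le_card; intro x hx
  simp only [mem_filter] at hx ⊢
  exact ⟨hx.1, by omega⟩

theorem clt_zero (S : Finset ℕ) : clt S 0 = 0 := by
  unfold clt
  rw [card_eq_zero, filter_eq_empty_iff]
  intro x _; omega

/-- interval count -/
noncomputable def icnt (S : Finset ℕ) (a b : ℕ) : ℕ :=
  (S.filter (fun x => a ≤ x ∧ x < b)).card

theorem clt_add_icnt (S : Finset ℕ) {a b : ℕ} (h : a ≤ b) :
    clt S b = clt S a + icnt S a b := by
  unfold clt icnt
  rw [← card_union_of_disjoint]
  · congr 1; ext x; simp only [mem_union, mem_filter]; constructor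
    · rintro ⟨hx, hlt⟩; by_cases h' : x < a
      · exact Or.inl ⟨hx, h'⟩
      · exact Or.inr ⟨hx, by omega, hlt⟩
    · rintro (⟨hx,h'⟩|⟨hx,h1,h2⟩); exacts [⟨hx, by omega⟩, ⟨hx, h2⟩]
  · simp only [disjoint_left, mem_filter]; rintro x ⟨hx, h1⟩ ⟨_, h2, _⟩; omega

theorem filter_interval_insert (S : Finset ℕ) {s a : ℕ} (hs : s ∈ S) (ha : a ≤ s) :
    S.filter (fun x => a ≤ x ∧ x < s + 1) = insert s (S.filter (fun x => a ≤ x ∧ x < s)) := by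
  ext x; simp only [mem_insert, mem_filter]
  constructor
  · rintro ⟨hx, h1, h2⟩
    by_cases hxs : x = s
    · exact Or.inl hxs
    · exact Or.inr ⟨hx, h1, by omega⟩
  · rintro (rfl | ⟨hx, h1, h2⟩)
    · exact ⟨hs, ha, by omega⟩
    · exact ⟨hx, h1, by omega⟩

theorem icnt_succ_right (S : Finset ℕ) {s a : ℕ} (hs : s ∈ S) (ha : a ≤ s) :
    icnt S a (s + 1) = icnt S a s + 1 := by
  unfold icnt
  rw [filter_interval_insert S hs ha, card_insert_of_notMem (by simp)]

theorem clt_succ (S : Finset ℕ) (i : ℕ) :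
    clt S (i + 1) = clt S i + (if i ∈ S then 1 else 0) := by
  rw [clt_add_icnt S (Nat.le_succ i)]
  congr 1
  split_ifs with h
  · simp only [Nat.succ_eq_add_one]
    have h1 := icnt_succ_right S h (le_refl i)
    have h2 : icnt S i i = 0 := by
      unfold icnt; rw [card_eq_zero, filter_eq_empty_iff]; intro x _; omega
    omega
  · unfold icnt; rw [card_eq_zero, filter_eq_empty_iff]
    intro x hx
    by_cases hxi : x = i
    · subst hxi; exact fun h' => absurd hx h
    · omega

/-- The basic sparse counting lemma. -/
theorem icnt_le (S : Finset ℕ) (hS : Sparse S) : ∀ d a, 2 * icnt S a (a + d) ≤ d + 1 := by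
  intro d
  induction d using Nat.strong_induction_on with
  | _ d ih =>
    intro a
    match d, ih with
    | 0, _ =>
      have : icnt S a (a + 0) = 0 := by
        unfold icnt; rw [card_eq_zero, filter_eq_empty_iff]; intro x _; omega
      omega
    | 1, _ =>
      have : icnt S a (a + 1) ≤ 1 := by
        unfold icnt
        calc (S.filter (fun x => a ≤ x ∧ x < a + 1)).card ≤ ({a} : Finset ℕ).card := by
              apply card_le_card; intro x hx
              simp only [mem_filter] at hx; simp only [mem_singleton]; omega
          _ = 1 := by simp
      omega
    | (d+2), ih =>
      by_cases ha : a ∈ S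
      · have ha1 : a + 1 ∉ S := hS a ha
        have key : icnt S a (a + (d+2)) ≤ icnt S (a+2) (a + 2 + d) + 1 := by
          unfold icnt
          calc (S.filter (fun x => a ≤ x ∧ x < a + (d+2))).card
              ≤ (insert a (S.filter (fun x => a + 2 ≤ x ∧ x < a + 2 + d))).card := by
                apply card_le_card; intro x hx
                simp only [mem_filter] at hx
                obtain ⟨hx, h1, h2⟩ := hx
                simp only [mem_insert, mem_filter]
                have : x = a ∨ x = a + 1 ∨ a + 2 ≤ x := by omega
                rcases this with rfl | rfl | h'
                · exact Or.inl rfl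
                · exact absurd hx ha1
                · exact Or.inr ⟨hx, h', by omega⟩
            _ ≤ _ := card_insert_le _ _
        have := ih d (by omega) (a + 2)
        omega
      · have key : icnt S a (a + (d+2)) ≤ icnt S (a+1) (a + 1 + (d+1)) := by
          unfold icnt
          apply card_le_card; intro x hx
          simp only [mem_filter] at hx ⊢
          obtain ⟨hx, h1, h2⟩ := hx
          have : x = a ∨ a + 1 ≤ x := by omega
          rcases this with rfl | h'
          · exact absurd hx ha
          · exact ⟨hx, h', by omega⟩
        have := ih (d+1) (by omega) (a + 1)
        omega

/-- Count in `[a, s)` when the right endpoint is in a sparse `S`. -/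
theorem icnt_le_right (S : Finset ℕ) (hS : Sparse S) {s : ℕ} (hs : s ∈ S) (a : ℕ)
    (ha : a ≤ s) : 2 * icnt S a s ≤ s - a := by
  have h1 := icnt_succ_right S hs ha
  have := icnt_le S hS (s + 1 - a) a
  rw [show a + (s + 1 - a) = s + 1 by omega] at this
  omega

/-- exactness: `2 * clt S s ≤ s` for `s ∈ S` sparse. -/
theorem two_clt_le (S : Finset ℕ) (hS : Sparse S) {s : ℕ} (hs : s ∈ S) :
    2 * clt S s ≤ s := by
  have h0 : clt S s = icnt S 0 s := by
    rw [clt_add_icnt S (Nat.zero_le s), clt_zero, Nat.zero_add]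
  have := icnt_le_right S hS hs 0 (Nat.zero_le s)
  omega

/-- weak monotonicity of `qf` on a sparse set. -/
theorem qf_mono (S : Finset ℕ) (hS : Sparse S) {s s' : ℕ} (hs : s ∈ S) (hs' : s' ∈ S)
    (h : s ≤ s') : qf S s ≤ qf S s' := by
  have h1 := clt_add_icnt S h
  have h2 := icnt_le_right S hS hs' s h
  have h3 := two_clt_le S hS hs
  unfold qf
  omega

end StarAux
namespace StarAux
open Finset
open scoped Classical

/-- spread a set of "token positions" to "time positions". -/
noncomputable def spreadF (A : Finset ℕ) : Finset ℕ := A.image (fun a => a + clt A a)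

/-- inverse of `spreadF`. -/
noncomputable def unspreadF (S : Finset ℕ) : Finset ℕ := S.image (fun s => s - clt S s)

theorem spread_strict (A : Finset ℕ) {a a' : ℕ} (ha : a ∈ A) (_ha' : a' ∈ A)
    (h : a < a') : (a + clt A a) + 2 ≤ a' + clt A a' := by
  have h1 := clt_add_icnt A (le_of_lt h)
  have h2 : 1 ≤ icnt A a a' := by
    apply card_pos.mpr
    exact ⟨a, mem_filter.mpr ⟨ha, le_refl a, h⟩⟩
  omega

theorem spread_mono (A : Finset ℕ) {a a' : ℕ} (h : a ≤ a') :
    a + clt A a ≤ a' + clt A a' := by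
  have := clt_mono A h; omega

theorem spread_injOn (A : Finset ℕ) : ∀ a ∈ A, ∀ a' ∈ A,
    a + clt A a = a' + clt A a' → a = a' := by
  intro a ha a' ha' h
  rcases Nat.lt_trichotomy a a' with h'|h'|h'
  · have := spread_strict A ha ha' h'; omega
  · exact h'
  · have := spread_strict A ha' ha h'; omega

theorem card_spread (A : Finset ℕ) : (spreadF A).card = A.card :=
  card_image_of_injOn (spread_injOn A)

theorem mem_spread {A : Finset ℕ} {x : ℕ} :
    x ∈ spreadF A ↔ ∃ a ∈ A, a + clt A a = x := by
  simp [spreadF]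

theorem spread_sparse (A : Finset ℕ) : Sparse (spreadF A) := by
  intro x hx hx1
  obtain ⟨a, ha, rfl⟩ := mem_spread.mp hx
  obtain ⟨a', ha', he⟩ := mem_spread.mp hx1
  rcases Nat.lt_trichotomy a a' with h'|h'|h'
  · have := spread_strict A ha ha' h'; omega
  · subst h'; omega
  · have := spread_strict A ha' ha h'; omega

theorem clt_lt_card {A : Finset ℕ} {a : ℕ} (ha : a ∈ A) : clt A a + 1 ≤ A.card := by
  have : insert a (A.filter (· < a)) ⊆ A := by
    intro x hx; rcases mem_insert.mp hx with rfl | hx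
    · exact ha
    · exact (mem_filter.mp hx).1
  have h2 := card_le_card this
  rw [card_insert_of_notMem (by simp)] at h2
  unfold clt; omega

theorem spread_bound {A : Finset ℕ} {m b : ℕ} (hA : A ⊆ range (m - b))
    (hcard : A.card = b) : ∀ s ∈ spreadF A, s + 2 ≤ m := by
  intro s hs
  obtain ⟨a, ha, rfl⟩ := mem_spread.mp hs
  have h1 : a < m - b := mem_range.mp (hA ha)
  have h2 := clt_lt_card ha
  rw [hcard] at h2
  omega

theorem clt_spread (A : Finset ℕ) {a : ℕ} (ha : a ∈ A) :
    clt (spreadF A) (a + clt A a) = clt A a := by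
  show ((spreadF A).filter (· < a + clt A a)).card = clt A a
  rw [show (spreadF A).filter (· < a + clt A a)
      = (A.filter (· < a)).image (fun x => x + clt A x) by
    ext y; simp only [mem_image, mem_filter]
    constructor
    · rintro ⟨hy, hlt⟩
      obtain ⟨a', ha', rfl⟩ := mem_spread.mp hy
      refine ⟨a', ⟨ha', ?_⟩, rfl⟩
      by_contra h
      have := spread_mono A (show a ≤ a' by omega)
      omega
    · rintro ⟨a', ⟨ha', hlt⟩, rfl⟩
      refine ⟨mem_spread.mpr ⟨a', ha', rfl⟩, ?_⟩
      have := spread_strict A ha' ha hlt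
      omega]
  rw [card_image_of_injOn (fun x hx y hy h =>
    spread_injOn A x (mem_filter.mp hx).1 y (mem_filter.mp hy).1 h)]
  rfl

theorem unspread_spread (A : Finset ℕ) : unspreadF (spreadF A) = A := by
  unfold unspreadF spreadF
  rw [image_image]
  have : ∀ a ∈ A, (fun s => s - clt (spreadF A) s) ((fun a => a + clt A a) a) = a := by
    intro a ha
    simp only
    rw [show a + clt A a = a + clt A a from rfl]
    unfold spreadF
    rw [show ((A.image fun a => a + clt A a)) = spreadF A from rfl]
    rw [clt_spread A ha]
    omega
  calc A.image ((fun s => s - clt (spreadF A) s) ∘ (fun a => a + clt A a))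
      = A.image id := image_congr (by intro a ha; exact this a ha)
    _ = A := image_id

theorem unspread_strict (S : Finset ℕ) (hS : Sparse S) {s s' : ℕ} (hs : s ∈ S)
    (hs' : s' ∈ S) (h : s < s') : s - clt S s < s' - clt S s' := by
  have h1 := clt_add_icnt S (le_of_lt h)
  have h2 := icnt_le_right S hS hs' s (le_of_lt h)
  have h3 : 1 ≤ icnt S s s' := card_pos.mpr ⟨s, mem_filter.mpr ⟨hs, le_refl s, h⟩⟩
  have h4 := two_clt_le S hS hs
  have h5 := two_clt_le S hS hs'
  omega

theorem unspread_injOn (S : Finset ℕ) (hS : Sparse S) : ∀ s ∈ S, ∀ s' ∈ S,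
    s - clt S s = s' - clt S s' → s = s' := by
  intro s hs s' hs' h
  rcases Nat.lt_trichotomy s s' with h'|h'|h'
  · have := unspread_strict S hS hs hs' h'; omega
  · exact h'
  · have := unspread_strict S hS hs' hs h'; omega

theorem card_unspread (S : Finset ℕ) (hS : Sparse S) : (unspreadF S).card = S.card :=
  card_image_of_injOn (unspread_injOn S hS)

theorem mem_unspread {S : Finset ℕ} {x : ℕ} :
    x ∈ unspreadF S ↔ ∃ s ∈ S, s - clt S s = x := by
  simp [unspreadF]

theorem clt_unspread (S : Finset ℕ) (hS : Sparse S) {s : ℕ} (hs : s ∈ S) :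
    clt (unspreadF S) (s - clt S s) = clt S s := by
  show ((unspreadF S).filter (· < s - clt S s)).card = clt S s
  rw [show (unspreadF S).filter (· < s - clt S s)
      = (S.filter (· < s)).image (fun x => x - clt S x) by
    ext y; simp only [mem_image, mem_filter]
    constructor
    · rintro ⟨hy, hlt⟩
      obtain ⟨s', hs', rfl⟩ := mem_unspread.mp hy
      refine ⟨s', ⟨hs', ?_⟩, rfl⟩
      rcases Nat.lt_trichotomy s s' with h'|h'|h'
      · have := unspread_strict S hS hs hs' h'; omega
      · subst h'; omega
      · exact h'
    · rintro ⟨s', ⟨hs', hlt⟩, rfl⟩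
      refine ⟨mem_unspread.mpr ⟨s', hs', rfl⟩, unspread_strict S hS hs' hs hlt⟩]
  rw [card_image_of_injOn (fun x hx y hy h =>
    unspread_injOn S hS x (mem_filter.mp hx).1 y (mem_filter.mp hy).1 h)]
  rfl

theorem spread_unspread (S : Finset ℕ) (hS : Sparse S) : spreadF (unspreadF S) = S := by
  unfold spreadF unspreadF
  rw [image_image]
  calc S.image ((fun a => a + clt (unspreadF S) a) ∘ (fun s => s - clt S s))
      = S.image id := by
        apply image_congr
        intro s hs
        simp only [Function.comp, id]
        rw [clt_unspread S hS hs]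
        have := two_clt_le S hS hs
        omega
    _ = S := image_id

theorem unspread_bound {S : Finset ℕ} {m b : ℕ} (hS : Sparse S)
    (hb : ∀ s ∈ S, s + 2 ≤ m) (hcard : S.card = b) :
    unspreadF S ⊆ range (m - b) := by
  intro x hx
  obtain ⟨s, hs, rfl⟩ := mem_unspread.mp hx
  have h1 := hb s hs
  have h2 := two_clt_le S hS hs
  have hsplit := card_filter_add_card_filter_not (s := S) (p := (· < s))
  have hcnt : (S.filter (fun x => ¬ x < s)).card = icnt S s (m - 1) := by
    unfold icnt
    congr 1
    apply filter_congr
    intro x hx'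
    have := hb x hx'
    simp only [not_lt]
    constructor
    · intro h; exact ⟨h, by omega⟩
    · intro h; exact h.1
  have h3 : 2 * icnt S s (m - 1) ≤ m - s := by
    have := icnt_le S (by exact hS) (m - 1 - s) s
    rw [show s + (m - 1 - s) = m - 1 by omega] at this
    omega
  have h4 : 1 ≤ icnt S s (m - 1) := by
    apply card_pos.mpr
    exact ⟨s, mem_filter.mpr ⟨hs, le_refl s, by omega⟩⟩
  rw [mem_range]
  have : clt S s + icnt S s (m - 1) = b := by
    unfold clt; omega
  omega

end StarAux
namespace StarAux
open Finset
open scoped Classical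

noncomputable def expandTab (u : ℕ → ℕ → ℕ) (S : Finset ℕ) : ℕ → ℕ → ℕ :=
  fun i => if 1 ≤ i ∧ (i-1) ∈ S then addRow 0 (u ((i-1) - 2 * clt S (i-1)))
           else u (i - 2 * clt S (i-1))

noncomputable def contractTab (t : ℕ → ℕ → ℕ) (S : Finset ℕ) : ℕ → ℕ → ℕ :=
  fun n => t (θf S n)

theorem two_clt_le_self (S : Finset ℕ) (hS : Sparse S) (j : ℕ) : 2 * clt S j ≤ j + 1 := by
  have h0 : clt S j = icnt S 0 j := by
    rw [clt_add_icnt S (Nat.zero_le j), clt_zero, Nat.zero_add]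
  have := icnt_le S hS j 0
  rw [Nat.zero_add] at this
  omega

theorem clt_pred (S : Finset ℕ) {i : ℕ} (hi : 1 ≤ i) (h : i - 1 ∉ S) :
    clt S i = clt S (i - 1) := by
  have h1 := clt_succ S (i - 1)
  rw [if_neg h] at h1
  rw [show i - 1 + 1 = i by omega] at h1
  omega

theorem expand_at_mem {u : ℕ → ℕ → ℕ} {S : Finset ℕ} (hS : Sparse S) {s : ℕ} (hs : s ∈ S) :
    expandTab u S s = u (qf S s) := by
  unfold expandTab
  rw [if_neg]
  · rcases Nat.eq_zero_or_pos s with rfl|hp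
    · rfl
    · rw [← clt_pred S hp (fun h => hS (s-1) h (by rw [show s - 1 + 1 = s by omega]; exact hs))]
      rfl
  · rintro ⟨h1, h2⟩
    exact hS (s-1) h2 (by rw [show s - 1 + 1 = s by omega]; exact hs)

theorem expand_at_succ {u : ℕ → ℕ → ℕ} {S : Finset ℕ} {s : ℕ} (hs : s ∈ S) :
    expandTab u S (s+1) = addRow 0 (u (qf S s)) := by
  unfold expandTab
  rw [if_pos ⟨by omega, by simpa using hs⟩]
  simp [qf]

theorem expand_at_succ2 {u : ℕ → ℕ → ℕ} {S : Finset ℕ} (hS : Sparse S) {s : ℕ} (hs : s ∈ S) :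
    expandTab u S (s+2) = u (qf S s) := by
  unfold expandTab
  rw [if_neg (by rintro ⟨-, h2⟩; exact hS s hs (by simpa using h2))]
  have h1 : clt S (s + 1) = clt S s + 1 := by rw [clt_succ S s, if_pos hs]
  have h2 := two_clt_le S hS hs
  have h3 : s + 2 - 2 * clt S (s + 2 - 1) = qf S s := by
    rw [show s + 2 - 1 = s + 1 by omega, h1, qf]; omega
  rw [h3]

theorem expand_at_free {u : ℕ → ℕ → ℕ} {S : Finset ℕ} {i : ℕ}
    (h : ¬(1 ≤ i ∧ (i-1) ∈ S)) :
    expandTab u S i = u (i - 2 * clt S (i-1)) := by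
  unfold expandTab; rw [if_neg h]

/-- shapes facts -/
theorem addRow0_eq {f g : ℕ → ℕ} (h : AddSquareAt 0 f g) : g = addRow 0 f := by
  funext j
  unfold addRow
  by_cases hj : j = 0
  · subst hj; simpa using h.1
  · rw [if_neg hj]; exact h.2 j hj

theorem addSquareAt_addRow0 (f : ℕ → ℕ) : AddSquareAt 0 f (addRow 0 f) := by
  constructor
  · simp [addRow]
  · intro i hi; simp [addRow, hi]

theorem isShape_addRow0 {f : ℕ → ℕ} (h : IsShape f) : IsShape (addRow 0 f) := by
  obtain ⟨hmono, N, hN⟩ := h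
  constructor
  · intro i
    unfold addRow
    rcases Nat.eq_zero_or_pos i with rfl|hp
    · rw [if_neg (by omega : ¬(0+1 = 0)), if_pos rfl]
      have := hmono 0; omega
    · rw [if_neg (by omega : ¬(i+1 = 0)), if_neg (by omega : ¬(i = 0))]
      exact hmono i
  · refine ⟨N + 1, ?_⟩
    unfold addRow
    rw [if_neg (by omega : ¬(N+1 = 0))]
    have := hmono N
    omega

theorem rowsLE_addRow0 {f : ℕ → ℕ} {r : ℕ} (hr : 1 ≤ r) (h : RowsLE r f) :
    RowsLE r (addRow 0 f) := by
  unfold RowsLE addRow at *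
  rw [if_neg (by omega)]
  exact h

theorem startab_step_all {k : ℕ} {lam : ℕ → ℕ} {m : ℕ} {u : ℕ → ℕ → ℕ}
    (hu : IsStarTab k lam m u) (n : ℕ) : StarStep (u n) (u (n+1)) := by
  rcases Nat.lt_or_ge n m with h|h
  · exact hu.2.2.1 n h
  · left; rw [hu.2.1 n h, hu.2.1 (n+1) (by omega)]

/-- consequences of PairAt -/
theorem pairAt_succ {m : ℕ} {t : ℕ → ℕ → ℕ} {s : ℕ} (h : PairAt m t s) :
    t (s+1) = addRow 0 (t s) := addRow0_eq h.2.1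

theorem pairs_sparse {m : ℕ} {t : ℕ → ℕ → ℕ} {S : Finset ℕ}
    (h : ∀ s ∈ S, PairAt m t s) : Sparse S := by
  intro s hs hs1
  have p1 := h s hs
  have p2 := h (s+1) hs1
  have e1 : t (s+1) 0 = t s 0 + 1 := p1.2.1.1
  have e2 : t (s+1+1) 0 = t (s+1) 0 + 1 := p2.2.1.1
  have e3 : t (s+2) = t s := p1.2.2
  have e4 : t (s+2) 0 = t s 0 := by rw [e3]
  rw [show s+1+1 = s+2 by omega] at e2
  omega

/-- The expansion of a star tableau along a sparse bounded set is a star tableau with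
pairs at the prescribed positions. -/
theorem expand_isStarTab {k : ℕ} (hk : 2 ≤ k) {lam : ℕ → ℕ} {m b : ℕ}
    {u : ℕ → ℕ → ℕ} (hu : IsStarTab k lam (m - 2*b) u) {S : Finset ℕ} (hS : Sparse S)
    (hbd : ∀ s ∈ S, s + 2 ≤ m) (hcard : S.card = b) :
    IsStarTab k lam m (expandTab u S) ∧ ∀ s ∈ S, PairAt m (expandTab u S) s := by
  have hfree : ∀ i, ¬(1 ≤ i ∧ (i-1) ∈ S) → expandTab u S i = u (i - 2 * clt S (i-1)) :=
    fun i h => expand_at_free h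
  constructor
  · refine ⟨?_, ?_, ?_, ?_⟩
    · rw [hfree 0 (by rintro ⟨h1, -⟩; omega), clt_zero]
      simpa using hu.1
    · intro i hi
      have hnot : ¬(1 ≤ i ∧ (i-1) ∈ S) := by
        rintro ⟨h1, h2⟩
        have := hbd _ h2
        omega
      rw [hfree i hnot]
      have hflt : S.filter (· < i - 1) = S := by
        apply filter_eq_self.mpr
        intro s hs
        have := hbd s hs
        show s < i - 1
        omega
      have hclt : clt S (i-1) = b := by unfold clt; rw [hflt, hcard]
      rw [hclt]
      exact hu.2.1 (i - 2*b) (by omega)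
    · intro i _
      by_cases hmem : i ∈ S
      · rw [expand_at_mem hS hmem, expand_at_succ hmem]
        exact Or.inr (Or.inl ⟨0, addSquareAt_addRow0 _⟩)
      · by_cases hprev : 1 ≤ i ∧ (i-1) ∈ S
        · obtain ⟨h1, h2⟩ := hprev
          have hi1 : i = (i-1) + 1 := by omega
          have hi2 : i + 1 = (i-1) + 2 := by omega
          have e1 : expandTab u S i = addRow 0 (u (qf S (i-1))) := by
            rw [hi1]; exact expand_at_succ h2
          have e2 : expandTab u S (i+1) = u (qf S (i-1)) := by
            rw [hi2]; exact expand_at_succ2 hS h2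
          rw [e1, e2]
          exact Or.inr (Or.inr ⟨0, addSquareAt_addRow0 _⟩)
        · rw [hfree i hprev]
          have hnot1 : ¬(1 ≤ i + 1 ∧ (i+1-1) ∈ S) := by
            rintro ⟨-, h2⟩
            exact hmem (by simpa using h2)
          rw [hfree (i+1) hnot1]
          have hc : clt S (i+1-1) = clt S (i-1) := by
            rcases Nat.eq_zero_or_pos i with rfl|hp
            · rfl
            · rw [show i + 1 - 1 = i from rfl, clt_pred S hp]
              intro h
              exact hprev ⟨hp, h⟩
          rw [hc]
          have hle := two_clt_le_self S hS (i-1)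
          rw [show i + 1 - 2 * clt S (i-1) = (i - 2 * clt S (i-1)) + 1 by omega]
          exact startab_step_all hu _
    · intro i
      unfold expandTab
      split_ifs with h
      · have hsh := hu.2.2.2 ((i-1) - 2 * clt S (i-1))
        exact ⟨isShape_addRow0 hsh.1, rowsLE_addRow0 (by omega) hsh.2⟩
      · exact hu.2.2.2 _
  · intro s hs
    refine ⟨hbd s hs, ?_, ?_⟩
    · rw [expand_at_mem hS hs, expand_at_succ hs]
      exact addSquareAt_addRow0 _
    · rw [expand_at_mem hS hs, expand_at_succ2 hS hs]

end StarAux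
namespace StarAux
open Finset
open scoped Classical

noncomputable def rf (S : Finset ℕ) (n : ℕ) : ℕ := (S.filter (fun s => qf S s < n)).card

theorem θf_def (S : Finset ℕ) (n : ℕ) : θf S n = n + 2 * rf S n := rfl

theorem qf_def (S : Finset ℕ) (s : ℕ) : qf S s = s - 2 * clt S s := rfl

theorem rf_zero (S : Finset ℕ) : rf S 0 = 0 := by
  unfold rf
  rw [card_eq_zero, filter_eq_empty_iff]
  intro x _
  omega

/-- C1a -/
theorem lt_imp_left (S : Finset ℕ) (hS : Sparse S) {s n : ℕ} (hs : s ∈ S)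
    (h : qf S s < n) : s + 2 ≤ θf S n := by
  have hsub : insert s (S.filter (· < s)) ⊆ S.filter (fun s' => qf S s' < n) := by
    intro x hx
    rcases mem_insert.mp hx with rfl | hx
    · exact mem_filter.mpr ⟨hs, h⟩
    · obtain ⟨hx1, hx2⟩ := mem_filter.mp hx
      exact mem_filter.mpr ⟨hx1, lt_of_le_of_lt (qf_mono S hS hx1 hs (le_of_lt hx2)) h⟩
  have hcard := card_le_card hsub
  rw [card_insert_of_notMem (by simp)] at hcard
  have h1 := two_clt_le S hS hs
  have h2 : qf S s = s - 2 * clt S s := rfl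
  rw [θf_def]
  unfold rf clt at *
  omega

/-- C1b -/
theorem ge_imp_right (S : Finset ℕ) (hS : Sparse S) {s n : ℕ} (hs : s ∈ S)
    (h : n ≤ qf S s) : θf S n ≤ s := by
  have hsub : S.filter (fun s' => qf S s' < n) ⊆ S.filter (· < s) := by
    intro x hx
    obtain ⟨hx1, hx2⟩ := mem_filter.mp hx
    refine mem_filter.mpr ⟨hx1, ?_⟩
    by_contra hc
    have := qf_mono S hS hs hx1 (by omega)
    omega
  have hcard := card_le_card hsub
  have h1 := two_clt_le S hS hs
  have h2 : qf S s = s - 2 * clt S s := rfl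
  rw [θf_def]
  unfold rf clt at *
  omega

/-- Identity (I): contraction of an expansion is the original. -/
theorem contract_expand (S : Finset ℕ) (hS : Sparse S) (u : ℕ → ℕ → ℕ) (n : ℕ) :
    contractTab (expandTab u S) S n = u n := by
  unfold contractTab
  rcases Nat.eq_zero_or_pos (θf S n) with h0|hpos
  · have hn0 : n = 0 := by rw [θf_def] at h0; omega
    subst hn0
    rw [h0, expand_at_free (by rintro ⟨h,-⟩; omega), clt_zero]
  · have hdichot : ∀ s ∈ S, qf S s < n ↔ s < θf S n - 1 := by
      intro s hs
      constructor
      · intro h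
        have := lt_imp_left S hS hs h
        omega
      · intro h
        by_contra hc
        have := ge_imp_right S hS hs (show n ≤ qf S s by omega)
        omega
    have hnotmem : θf S n - 1 ∉ S := by
      intro hmem
      rcases Nat.lt_or_ge (qf S (θf S n - 1)) n with h|h
      · have := lt_imp_left S hS hmem h
        omega
      · have := ge_imp_right S hS hmem h
        omega
    have hclt : clt S (θf S n - 1) = rf S n := by
      unfold clt rf
      congr 1
      exact (filter_congr (by intro x hx; exact (hdichot x hx).symm))
    rw [expand_at_free (by rintro ⟨-, hmem⟩; exact hnotmem hmem), hclt, θf_def,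
      show n + 2 * rf S n - 2 * rf S n = n by omega]

theorem icnt_top (S : Finset ℕ) {j : ℕ} (hj : j ∉ S) (a : ℕ) :
    icnt S a (j + 1) = icnt S a j := by
  unfold icnt
  congr 1
  apply filter_congr
  intro x hx
  constructor
  · rintro ⟨h1, h2⟩
    refine ⟨h1, ?_⟩
    by_cases hxj : x = j
    · exact absurd (hxj ▸ hx) hj
    · omega
  · rintro ⟨h1, h2⟩; exact ⟨h1, by omega⟩

theorem icnt_bot (S : Finset ℕ) {a : ℕ} (ha : a ∉ S) (b : ℕ) :
    icnt S a b = icnt S (a + 1) b := by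
  unfold icnt
  congr 1
  apply filter_congr
  intro x hx
  constructor
  · rintro ⟨h1, h2⟩
    refine ⟨?_, h2⟩
    by_cases hxa : x = a
    · exact absurd (hxa ▸ hx) ha
    · omega
  · rintro ⟨h1, h2⟩; exact ⟨by omega, h2⟩

/-- C4: at a free position, `θf` inverts the contraction of positions. -/
theorem θf_free (S : Finset ℕ) (hS : Sparse S) {i : ℕ} (hi : 1 ≤ i)
    (h1 : i - 1 ∉ S) (h2 : 2 ≤ i → i - 2 ∉ S) :
    θf S (i - 2 * clt S (i - 1)) = i := by
  have hkey : ∀ s ∈ S, qf S s < i - 2 * clt S (i-1) ↔ s < i - 1 := by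
    intro s hs
    have hq : qf S s = s - 2 * clt S s := rfl
    have hcs := two_clt_le S hS hs
    constructor
    · intro h
      by_contra hc
      -- s ≥ i - 1, hence s ≥ i since i - 1 ∉ S
      have hsi : i ≤ s := by
        rcases Nat.lt_or_ge s i with h'|h'
        · have : s = i - 1 := by omega
          exact absurd (this ▸ hs) h1
        · exact h'
      have hsplit := clt_add_icnt S (show i - 1 ≤ s by omega)
      have hbot : icnt S (i-1) s = icnt S i s := by
        rw [icnt_bot S h1, show i - 1 + 1 = i by omega]
      have hright := icnt_le_right S hS hs i hsi
      omega
    · intro h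
      -- s < i - 1, and s ≠ i - 2 since i - 2 ∉ S, so s + 3 ≤ i
      have hi2 : 2 ≤ i := by omega
      have hs3 : s + 3 ≤ i := by
        by_contra hc
        have : s = i - 2 := by omega
        exact absurd (this ▸ hs) (h2 hi2)
      have hsplit := clt_add_icnt S (show s ≤ i - 1 by omega)
      have htop : icnt S s (i-1) = icnt S s (i-2) := by
        rw [show i - 1 = (i - 2) + 1 by omega, icnt_top S (h2 hi2)]
      have hle : 2 * icnt S s (i - 2) ≤ i - 1 - s := by
        have := icnt_le S hS (i - 2 - s) s
        rw [show s + (i - 2 - s) = i - 2 by omega] at this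
        omega
      omega
  have hflt : S.filter (fun s => qf S s < i - 2 * clt S (i-1)) = S.filter (· < i - 1) :=
    filter_congr (by intro x hx; exact hkey x hx)
  have h2c := two_clt_le_self S hS (i - 1)
  rw [θf_def]
  unfold rf
  rw [hflt]
  unfold clt at h2c ⊢
  omega

/-- D6: chain lemma. -/
theorem theta_qf (S : Finset ℕ) (hS : Sparse S) {t : ℕ → ℕ → ℕ}
    (hp : ∀ s ∈ S, t (s + 2) = t s) :
    ∀ s, s ∈ S → t (θf S (qf S s)) = t s := by
  intro s
  induction s using Nat.strong_induction_on with
  | _ s ih =>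
    intro hs
    have hsub : S.filter (fun s' => qf S s' < qf S s) ⊆ S.filter (· < s) := by
      intro x hx
      obtain ⟨hx1, hx2⟩ := mem_filter.mp hx
      refine mem_filter.mpr ⟨hx1, ?_⟩
      by_contra hc
      have := qf_mono S hS hs hx1 (by omega)
      omega
    have hcard := card_le_card hsub
    have hcs := two_clt_le S hS hs
    have hq : qf S s = s - 2 * clt S s := rfl
    rcases Nat.eq_or_lt_of_le hcard with heq|hlt
    · -- θf (qf s) = s
      have : θf S (qf S s) = s := by
        rw [θf_def]
        unfold rf
        rw [show (S.filter (fun s' => qf S s' < qf S s)).card = clt S s from heq]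
        omega
      rw [this]
    · -- there is an earlier element with the same qf; it is s - 2 ∈ S
      have hne : ∃ x ∈ S.filter (· < s), x ∉ S.filter (fun s' => qf S s' < qf S s) := by
        by_contra hc
        push_neg at hc
        have hsub2 : S.filter (· < s) ⊆ S.filter (fun s' => qf S s' < qf S s) := hc
        have := card_le_card hsub2
        omega
      obtain ⟨s', hs'mem, hs'not⟩ := hne
      obtain ⟨hs'S, hs'lt⟩ := mem_filter.mp hs'mem
      have hflt_ne : (S.filter (· < s)).Nonempty := ⟨s', hs'mem⟩
      obtain ⟨s'', hs''mem, hmax⟩ : ∃ y, y ∈ S.filter (· < s) ∧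
          ∀ x ∈ S.filter (· < s), x ≤ y :=
        ⟨(S.filter (· < s)).max' hflt_ne, max'_mem _ _, fun x hx => le_max' _ x hx⟩
      obtain ⟨hs''S, hs''lt⟩ := mem_filter.mp hs''mem
      have hle : s' ≤ s'' := hmax s' hs'mem
      have hq_s' : qf S s' = qf S s := by
        have h1 : ¬ qf S s' < qf S s := fun h => hs'not (mem_filter.mpr ⟨hs'S, h⟩)
        have h2 := qf_mono S hS hs'S hs (le_of_lt hs'lt)
        omega
      have hq_s'' : qf S s'' = qf S s := by
        have h1 := qf_mono S hS hs'S hs''S hle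
        have h2 := qf_mono S hS hs''S hs (le_of_lt hs''lt)
        omega
      -- show s = s'' + 2
      have hicnt : S.filter (fun x => s'' ≤ x ∧ x < s) = {s''} := by
        ext x
        simp only [mem_filter, mem_singleton]
        constructor
        · rintro ⟨hxS, hx1, hx2⟩
          have := hmax x (mem_filter.mpr ⟨hxS, hx2⟩)
          omega
        · rintro rfl
          exact ⟨hs''S, le_refl _, hs''lt⟩
      have hsplit := clt_add_icnt S (le_of_lt hs''lt)
      have hicnt1 : icnt S s'' s = 1 := by
        unfold icnt
        rw [hicnt, card_singleton]
      have hcs'' := two_clt_le S hS hs''S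
      have hq'' : qf S s'' = s'' - 2 * clt S s'' := rfl
      have hs2 : s = s'' + 2 := by omega
      have hmem2 : s - 2 ∈ S := by rw [show s - 2 = s'' by omega]; exact hs''S
      have ht2 : t s = t (s - 2) := by
        have := hp (s - 2) hmem2
        rw [show s - 2 + 2 = s by omega] at this
        exact this
      have hqeq : qf S (s - 2) = qf S s := by rw [show s - 2 = s'' by omega]; exact hq_s''
      rw [← hqeq, ih (s-2) (by omega) hmem2, ht2]

/-- D7: the key step-compatibility claim. -/
theorem theta_succ_pred (S : Finset ℕ) (hS : Sparse S) {t : ℕ → ℕ → ℕ}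
    (hp : ∀ s ∈ S, t (s + 2) = t s) (n : ℕ) :
    t (θf S (n + 1) - 1) = t (θf S n) := by
  have hsplit : rf S (n+1) = rf S n + (S.filter (fun s => qf S s = n)).card := by
    unfold rf
    rw [← card_union_of_disjoint]
    · congr 1
      ext x
      simp only [mem_union, mem_filter]
      constructor
      · rintro ⟨hx, h⟩
        rcases Nat.lt_or_ge (qf S x) n with h'|h'
        · exact Or.inl ⟨hx, h'⟩
        · exact Or.inr ⟨hx, by omega⟩
      · rintro (⟨hx,h⟩|⟨hx,h⟩)
        · exact ⟨hx, by omega⟩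
        · exact ⟨hx, by omega⟩
    · simp only [disjoint_left, mem_filter]
      rintro x ⟨-, h1⟩ ⟨-, h2⟩
      omega
  rcases Nat.eq_zero_or_pos (S.filter (fun s => qf S s = n)).card with he|he
  · rw [show θf S (n+1) - 1 = θf S n by rw [θf_def, θf_def]; omega]
  · have hne : (S.filter (fun s => qf S s = n)).Nonempty := card_pos.mp he
    obtain ⟨s₀, hs₀mem, hmax⟩ : ∃ y, y ∈ S.filter (fun s => qf S s = n) ∧
        ∀ x ∈ S.filter (fun s => qf S s = n), x ≤ y :=
      ⟨(S.filter (fun s => qf S s = n)).max' hne, max'_mem _ _, fun x hx => le_max' _ x hx⟩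
    obtain ⟨hs₀S, hs₀q⟩ := mem_filter.mp hs₀mem
    -- clt S s₀ = rf S (n+1) - 1
    have hflt : S.filter (· < s₀) = (S.filter (fun s => qf S s < n + 1)).erase s₀ := by
      ext x
      simp only [mem_erase, mem_filter]
      constructor
      · rintro ⟨hx, hlt⟩
        have := qf_mono S hS hx hs₀S (le_of_lt hlt)
        exact ⟨by omega, hx, by omega⟩
      · rintro ⟨hne', hx, hle⟩
        refine ⟨hx, ?_⟩
        rcases Nat.lt_trichotomy x s₀ with h'|h'|h'
        · exact h'
        · exact absurd h' hne'
        · have h1 := qf_mono S hS hs₀S hx (le_of_lt h')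
          have h2 : qf S x = n := by omega
          have := hmax x (mem_filter.mpr ⟨hx, h2⟩)
          omega
    have hclt : clt S s₀ + 1 = rf S (n+1) := by
      unfold clt rf
      rw [hflt, card_erase_of_mem (mem_filter.mpr ⟨hs₀S, by omega⟩)]
      have : 1 ≤ (S.filter (fun s => qf S s < n + 1)).card := by
        apply card_pos.mpr
        exact ⟨s₀, mem_filter.mpr ⟨hs₀S, by omega⟩⟩
      omega
    have hcs := two_clt_le S hS hs₀S
    have hq : qf S s₀ = s₀ - 2 * clt S s₀ := rfl
    have hkey : θf S (n+1) - 1 = s₀ + 2 := by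
      rw [θf_def]
      omega
    rw [hkey, hp s₀ hs₀S]
    have := theta_qf S hS hp s₀ hs₀S
    rw [hs₀q] at this
    exact this.symm

/-- For a bounded sparse set, all contracted positions are at most `m - 2b`. -/
theorem qf_le (S : Finset ℕ) (hS : Sparse S) {m b : ℕ}
    (hbd : ∀ s ∈ S, s + 2 ≤ m) (hcard : S.card = b) {s : ℕ} (hs : s ∈ S) :
    qf S s + 2 * b ≤ m := by
  have h1 := hbd s hs
  have h2 := two_clt_le S hS hs
  have hsplit := card_filter_add_card_filter_not (s := S) (p := (· < s))
  have hcnt : (S.filter (fun x => ¬ x < s)).card = icnt S s (m - 1) := by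
    unfold icnt
    congr 1
    apply filter_congr
    intro x hx'
    have := hbd x hx'
    simp only [not_lt]
    exact ⟨fun h => ⟨h, by omega⟩, fun h => h.1⟩
  have h3 : 2 * icnt S s (m - 1) ≤ m - s := by
    have := icnt_le S hS (m - 1 - s) s
    rw [show s + (m - 1 - s) = m - 1 by omega] at this
    omega
  have h4 : 1 ≤ icnt S s (m - 1) :=
    card_pos.mpr ⟨s, mem_filter.mpr ⟨hs, le_refl s, by omega⟩⟩
  have h5 : clt S s + icnt S s (m - 1) = b := by
    have hclt_eq : clt S s = (S.filter (· < s)).card := rfl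
    omega
  have hq : qf S s = s - 2 * clt S s := rfl
  have hc0 : clt S s = (S.filter (· < s)).card := rfl
  omega

end StarAux
namespace StarAux
open Finset
open scoped Classical

theorem contract_isStarTab {k : ℕ} {lam : ℕ → ℕ} {m b : ℕ} {t : ℕ → ℕ → ℕ}
    (ht : IsStarTab k lam m t) {S : Finset ℕ}
    (hpairs : ∀ s ∈ S, PairAt m t s) (hcard : S.card = b) :
    IsStarTab k lam (m - 2*b) (contractTab t S) := by
  have hS := pairs_sparse hpairs
  have hp2 : ∀ s ∈ S, t (s+2) = t s := fun s hs => (hpairs s hs).2.2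
  have hbd : ∀ s ∈ S, s + 2 ≤ m := fun s hs => (hpairs s hs).1
  have h2bm : 2 * b ≤ m := by
    rcases S.eq_empty_or_nonempty with rfl|⟨s, hs⟩
    · simp at hcard; omega
    · have h1 := qf_le S hS hbd hcard hs
      omega
  refine ⟨?_, ?_, ?_, ?_⟩
  · show t (θf S 0) = emptyShape
    rw [show θf S 0 = 0 by rw [θf_def, rf_zero]]
    exact ht.1
  · intro n hn
    show t (θf S n) = lam
    rcases Nat.lt_or_ge (m - 2*b) n with hgt|hle2
    · have hrf : rf S n = b := by
        unfold rf
        rw [filter_eq_self.mpr (fun s hs => by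
          have := qf_le S hS hbd hcard hs
          show qf S s < n
          omega)]
        exact hcard
      apply ht.2.1
      rw [θf_def, hrf]
      omega
    · have hn_eq : n = m - 2*b := by omega
      have key := theta_succ_pred S hS hp2 n
      have hrf1 : rf S (n+1) = b := by
        unfold rf
        rw [filter_eq_self.mpr (fun s hs => by
          have := qf_le S hS hbd hcard hs
          show qf S s < n + 1
          omega)]
        exact hcard
      rw [← key, θf_def, hrf1]
      apply ht.2.1
      omega
  · intro n _
    show StarStep (t (θf S n)) (t (θf S (n+1)))
    have key := theta_succ_pred S hS hp2 n
    have hpos : 1 ≤ θf S (n+1) := by rw [θf_def]; omega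
    rw [← key]
    have hstep := startab_step_all ht (θf S (n+1) - 1)
    rw [show θf S (n+1) - 1 + 1 = θf S (n+1) by omega] at hstep
    exact hstep
  · intro n
    exact ht.2.2.2 (θf S n)

/-- Identity (II): expansion of a contraction is the original. -/
theorem expand_contract (S : Finset ℕ) {m : ℕ} {t : ℕ → ℕ → ℕ}
    (hpairs : ∀ s ∈ S, PairAt m t s) (i : ℕ) :
    expandTab (contractTab t S) S i = t i := by
  have hS := pairs_sparse hpairs
  have hp2 : ∀ s ∈ S, t (s+2) = t s := fun s hs => (hpairs s hs).2.2
  by_cases hA : 1 ≤ i ∧ (i-1) ∈ S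
  · obtain ⟨h1, h2⟩ := hA
    have e1 : expandTab (contractTab t S) S i
        = addRow 0 ((contractTab t S) (qf S (i-1))) := by
      rw [show i = (i-1)+1 by omega]
      exact expand_at_succ h2
    rw [e1]
    show addRow 0 (t (θf S (qf S (i-1)))) = t i
    rw [theta_qf S hS hp2 (i-1) h2]
    have hps := pairAt_succ (hpairs (i-1) h2)
    rw [show i - 1 + 1 = i by omega] at hps
    exact hps.symm
  · by_cases hB : 2 ≤ i ∧ (i-2) ∈ S
    · obtain ⟨h1, h2⟩ := hB
      have e1 : expandTab (contractTab t S) S i = (contractTab t S) (qf S (i-2)) := by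
        rw [show i = (i-2)+2 by omega]
        exact expand_at_succ2 hS h2
      rw [e1]
      show t (θf S (qf S (i-2))) = t i
      rw [theta_qf S hS hp2 (i-2) h2]
      have hq2 := hp2 (i-2) h2
      rw [show i - 2 + 2 = i by omega] at hq2
      exact hq2.symm
    · rw [expand_at_free hA]
      show t (θf S (i - 2 * clt S (i-1))) = t i
      rcases Nat.eq_zero_or_pos i with rfl|hpos
      · rw [show (0:ℕ) - 2 * clt S (0-1) = 0 by omega,
          show θf S 0 = 0 by rw [θf_def, rf_zero]]
      · have h1 : i - 1 ∉ S := fun h => hA ⟨hpos, h⟩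
        have h2 : 2 ≤ i → i - 2 ∉ S := fun hi2 h => hB ⟨hi2, h⟩
        rw [θf_free S hS hpos h1 h2]

end StarAux
namespace StarAux
open Finset
open scoped Classical

theorem shape_zero {f : ℕ → ℕ} (hf : ∀ i, f (i + 1) ≤ f i) {r : ℕ} (hr : f r = 0) :
    ∀ j, r ≤ j → f j = 0 := by
  intro j hj
  induction j with
  | zero => rwa [Nat.le_zero.mp hj] at hr
  | succ n ih =>
    rcases Nat.lt_or_ge n r with h|h
    · have : r = n + 1 := by omega
      rwa [this] at hr
    · have := hf n
      have := ih (by omega)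
      omega

theorem starStep_le {a c : ℕ → ℕ} (h : StarStep a c) : ∀ j, c j ≤ a j + 1 := by
  intro j
  rcases h with rfl | ⟨r, h1, h2⟩ | ⟨r, h1, h2⟩
  · omega
  · by_cases hj : j = r
    · subst hj; omega
    · rw [h2 j hj]; omega
  · by_cases hj : j = r
    · subst hj; omega
    · rw [← h2 j hj]; omega

theorem startab_bound {k : ℕ} {lam : ℕ → ℕ} {m : ℕ} {t : ℕ → ℕ → ℕ}
    (ht : IsStarTab k lam m t) : ∀ i j, t i j ≤ m := by
  have haux : ∀ i, i ≤ m → ∀ j, t i j ≤ i := by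
    intro i
    induction i with
    | zero => intro _ j; rw [ht.1]; exact Nat.zero_le 0
    | succ n ih =>
      intro hn j
      have hstep := ht.2.2.1 n (by omega)
      have := starStep_le hstep j
      have := ih (by omega) j
      omega
  intro i j
  rcases le_or_gt i m with h|h
  · exact le_trans (haux i h j) h
  · rw [ht.2.1 i (le_of_lt h), ← ht.2.1 m le_rfl]
    exact haux m le_rfl j

theorem startab_rows {k : ℕ} {lam : ℕ → ℕ} {m : ℕ} {t : ℕ → ℕ → ℕ}
    (ht : IsStarTab k lam m t) : ∀ i j, k ≤ j + 1 → t i j = 0 := by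
  intro i j hj
  obtain ⟨hsh, hrow⟩ := ht.2.2.2 i
  exact shape_zero hsh.1 hrow j (by omega)

theorem finite_startab (k : ℕ) (lam : ℕ → ℕ) (m : ℕ) :
    Finite {t : ℕ → ℕ → ℕ // IsStarTab k lam m t} := by
  apply Finite.of_injective
    (f := fun t : {t : ℕ → ℕ → ℕ // IsStarTab k lam m t} =>
      (fun i : Fin (m+1) => fun j : Fin k =>
        (⟨t.1 i j, Nat.lt_succ_of_le (startab_bound t.2 i j)⟩ : Fin (m+1))))
  intro t t' h
  apply Subtype.ext
  funext i j
  rcases le_or_gt i m with him|him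
  · rcases Nat.lt_or_ge j k with hjk|hjk
    · have := congrFun (congrFun h ⟨i, by omega⟩) ⟨j, hjk⟩
      simpa using this
    · rw [startab_rows t.2 i j (by omega), startab_rows t'.2 i j (by omega)]
  · rw [t.2.2.1 i (le_of_lt him), t'.2.2.1 i (le_of_lt him)]

/-- the finset of pair positions of a tableau -/
noncomputable def pairsF (m : ℕ) (t : ℕ → ℕ → ℕ) : Finset ℕ :=
  (range m).filter (fun i => PairAt m t i)

theorem mem_pairsF {m : ℕ} {t : ℕ → ℕ → ℕ} {i : ℕ} :
    i ∈ pairsF m t ↔ PairAt m t i := by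
  unfold pairsF
  rw [mem_filter, mem_range]
  exact ⟨fun h => h.2, fun h => ⟨by have := h.1; omega, h⟩⟩

theorem card_pairs_eq {m : ℕ} (t : ℕ → ℕ → ℕ) :
    Nat.card {i : ℕ // PairAt m t i} = (pairsF m t).card := by
  rw [← Nat.card_eq_finsetCard]
  exact Nat.card_congr (Equiv.subtypeEquivRight (fun i => mem_pairsF.symm))

theorem pairsF_card_le {m : ℕ} (t : ℕ → ℕ → ℕ) : (pairsF m t).card ≤ m := by
  calc (pairsF m t).card ≤ (range m).card := card_le_card (filter_subset _ _)
    _ = m := card_range m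

end StarAux
namespace StarAux
open Finset
open scoped Classical

/-- The main bijection: star tableaux of length `m` with `b` marked pairs correspond to
star tableaux of length `m - 2b` together with a `b`-subset of `range (m - b)`. -/
noncomputable def mainEquiv (k : ℕ) (hk : 2 ≤ k) (lam : ℕ → ℕ) (m b : ℕ) :
    {p : (ℕ → ℕ → ℕ) × Finset ℕ //
      IsStarTab k lam (m - 2*b) p.1 ∧ p.2 ∈ powersetCard b (range (m-b))} ≃
    {p : (ℕ → ℕ → ℕ) × Finset ℕ //
      IsStarTab k lam m p.1 ∧ p.2.card = b ∧ ∀ s ∈ p.2, PairAt m p.1 s} where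
  toFun p := ⟨(expandTab p.1.1 (spreadF p.1.2), spreadF p.1.2), by
    obtain ⟨hu, hA⟩ := p.2
    obtain ⟨hsub, hcard⟩ := mem_powersetCard.mp hA
    have hS := spread_sparse p.1.2
    have hbd := spread_bound hsub hcard
    have hcS : (spreadF p.1.2).card = b := by rw [card_spread]; exact hcard
    obtain ⟨h1, h2⟩ := expand_isStarTab hk hu hS hbd hcS
    exact ⟨h1, hcS, h2⟩⟩
  invFun p := ⟨(contractTab p.1.1 p.1.2, unspreadF p.1.2), by
    obtain ⟨ht, hcard, hpairs⟩ := p.2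
    have hS := pairs_sparse hpairs
    have hbd : ∀ s ∈ p.1.2, s + 2 ≤ m := fun s hs => (hpairs s hs).1
    refine ⟨contract_isStarTab ht hpairs hcard, mem_powersetCard.mpr
      ⟨unspread_bound hS hbd hcard, ?_⟩⟩
    rw [card_unspread _ hS]
    exact hcard⟩
  left_inv p := by
    obtain ⟨⟨u, A⟩, hu, hA⟩ := p
    apply Subtype.ext
    show (contractTab (expandTab u (spreadF A)) (spreadF A), unspreadF (spreadF A)) = (u, A)
    rw [unspread_spread A]
    have hS := spread_sparse A
    have : contractTab (expandTab u (spreadF A)) (spreadF A) = u := by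
      funext n
      exact contract_expand (spreadF A) hS u n
    rw [this]
  right_inv p := by
    obtain ⟨⟨t, S⟩, ht, hcard, hpairs⟩ := p
    apply Subtype.ext
    show (expandTab (contractTab t S) (spreadF (unspreadF S)), spreadF (unspreadF S)) = (t, S)
    have hS := pairs_sparse hpairs
    rw [spread_unspread S hS]
    have : expandTab (contractTab t S) S = t := by
      funext i
      exact expand_contract S hpairs i
    rw [this]

end StarAux

open StarAux Finset in
theorem sum_choose_Qstar' (k : ℕ) (hk : 2 ≤ k) (lam : ℕ → ℕ) (hlam : IsShape lam)
    (hrow : RowsLE (k - 1) lam) (m b : ℕ) (hb : 2 * b ≤ m) :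
    (∀ j, m < j → Qstar k lam m j = 0) ∧
    ∑ j ∈ Finset.Icc b m, j.choose b * Qstar k lam m j
      = (m - b).choose b * Ostar k lam (m - 2 * b) := by
  classical
  haveI hfinT : Finite {t : ℕ → ℕ → ℕ // IsStarTab k lam m t} := finite_startab k lam m
  letI : Fintype {t : ℕ → ℕ → ℕ // IsStarTab k lam m t} := Fintype.ofFinite _
  -- `Qstar` as a filtered count
  have hQ : ∀ j, Qstar k lam m j =
      (univ.filter (fun x : {t : ℕ → ℕ → ℕ // IsStarTab k lam m t} =>
        (pairsF m x.1).card = j)).card := by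
    intro j
    have e1 : Qstar k lam m j
        = Nat.card {t : ℕ → ℕ → ℕ // IsStarTab k lam m t ∧ (pairsF m t).card = j} :=
      Nat.card_congr (Equiv.subtypeEquivRight (fun t => by rw [card_pairs_eq]))
    rw [e1,
      Nat.card_congr (Equiv.subtypeSubtypeEquivSubtypeInter
        (fun t => IsStarTab k lam m t) (fun t => (pairsF m t).card = j)).symm,
      Nat.card_eq_fintype_card, Fintype.card_subtype]
  constructor
  · -- vanishing for large j
    intro j hj
    have : IsEmpty {t : ℕ → ℕ → ℕ //
        IsStarTab k lam m t ∧ Nat.card {i : ℕ // PairAt m t i} = j} := by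
      constructor
      rintro ⟨t, ht, hcard⟩
      rw [card_pairs_eq] at hcard
      have := pairsF_card_le (m := m) t
      omega
    exact Nat.card_of_isEmpty
  · -- the main count
    -- Left side: count pairs (t, S) with S a b-subset of pairs of t
    have hL : Nat.card {p : (ℕ → ℕ → ℕ) × Finset ℕ //
        IsStarTab k lam m p.1 ∧ p.2.card = b ∧ ∀ s ∈ p.2, PairAt m p.1 s}
        = ∑ j ∈ Finset.Icc b m, j.choose b * Qstar k lam m j := by
      have esig : {p : (ℕ → ℕ → ℕ) × Finset ℕ //
          IsStarTab k lam m p.1 ∧ p.2.card = b ∧ ∀ s ∈ p.2, PairAt m p.1 s}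
          ≃ (t : {t : ℕ → ℕ → ℕ // IsStarTab k lam m t}) ×
            {A : Finset ℕ // A ∈ (pairsF m t.1).powersetCard b} :=
        { toFun := fun p => ⟨⟨p.1.1, p.2.1⟩, ⟨p.1.2, mem_powersetCard.mpr
            ⟨fun s hs => mem_pairsF.mpr (p.2.2.2 s hs), p.2.2.1⟩⟩⟩
          invFun := fun q => ⟨(q.1.1, q.2.1), q.1.2, (mem_powersetCard.mp q.2.2).2,
            fun s hs => mem_pairsF.mp ((mem_powersetCard.mp q.2.2).1 hs)⟩
          left_inv := fun p => rfl
          right_inv := fun q => rfl }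
      rw [Nat.card_congr esig, Nat.card_eq_fintype_card, Fintype.card_sigma]
      have hterm : ∀ t : {t : ℕ → ℕ → ℕ // IsStarTab k lam m t},
          Fintype.card {A : Finset ℕ // A ∈ (pairsF m t.1).powersetCard b}
          = ((pairsF m t.1).card).choose b := by
        intro t
        have hnc : Nat.card {A : Finset ℕ // A ∈ (pairsF m t.1).powersetCard b}
            = ((pairsF m t.1).powersetCard b).card :=
          Nat.card_eq_finsetCard _
        rw [← Nat.card_eq_fintype_card, hnc, card_powersetCard]
      calc ∑ t : {t : ℕ → ℕ → ℕ // IsStarTab k lam m t},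
            Fintype.card {A : Finset ℕ // A ∈ (pairsF m t.1).powersetCard b}
          = ∑ t : {t : ℕ → ℕ → ℕ // IsStarTab k lam m t}, ((pairsF m t.1).card).choose b := by
            apply Finset.sum_congr rfl
            intro t _
            rw [hterm t]
        _ = ∑ j ∈ Finset.range (m+1), ∑ t ∈ univ.filter
              (fun x : {t : ℕ → ℕ → ℕ // IsStarTab k lam m t} => (pairsF m x.1).card = j),
              ((pairsF m t.1).card).choose b := by
            rw [Finset.sum_fiberwise_of_maps_to]
            intro x _
            rw [mem_range]
            have := pairsF_card_le (m := m) x.1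
            omega
        _ = ∑ j ∈ Finset.range (m+1), j.choose b * Qstar k lam m j := by
            apply Finset.sum_congr rfl
            intro j _
            rw [hQ j]
            rw [Finset.sum_congr rfl (fun t ht => by rw [(mem_filter.mp ht).2]),
              Finset.sum_const, smul_eq_mul, mul_comm]
        _ = ∑ j ∈ Finset.Icc b m, j.choose b * Qstar k lam m j := by
            symm
            apply Finset.sum_subset
            · intro j hj
              rw [mem_Icc] at hj
              rw [mem_range]
              omega
            · intro j hj hnot
              rw [mem_range] at hj
              rw [mem_Icc] at hnot
              have : j < b := by omega
              rw [Nat.choose_eq_zero_of_lt this, Nat.zero_mul]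
    -- Right side
    have hR : Nat.card {p : (ℕ → ℕ → ℕ) × Finset ℕ //
        IsStarTab k lam (m - 2*b) p.1 ∧ p.2 ∈ powersetCard b (range (m-b))}
        = (m - b).choose b * Ostar k lam (m - 2 * b) := by
      rw [Nat.card_congr (Equiv.subtypeProdEquivProd
        (p := fun t => IsStarTab k lam (m - 2*b) t)
        (q := fun A => A ∈ powersetCard b (range (m-b)))),
        Nat.card_prod]
      have h1 : Nat.card {A : Finset ℕ // A ∈ powersetCard b (range (m-b))}
          = (m - b).choose b := by
        rw [Nat.card_eq_finsetCard, card_powersetCard, card_range]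
      rw [h1, mul_comm]
      rfl
    rw [← hL, ← hR, Nat.card_congr (mainEquiv k hk lam m b).symm]

/-- `Σ_{j ≥ b} C(j, b) · Q_k^*(λ, m, j) = C(m−b, b) · O_k^*(λ, m−2b)`.
Since `Q_k^*(λ, m, j) = 0` for `j > m` (recorded in the first conjunct), the sum over all
`j ≥ b` equals the finite sum over `b ≤ j ≤ m`. -/
theorem sum_choose_Qstar (k : ℕ) (hk : 2 ≤ k) (lam : ℕ → ℕ) (hlam : IsShape lam)
    (hrow : RowsLE (k - 1) lam) (m b : ℕ) (hb : 2 * b ≤ m) :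
    (∀ j, m < j → Qstar k lam m j = 0) ∧
    ∑ j ∈ Finset.Icc b m, j.choose b * Qstar k lam m j
      = (m - b).choose b * Ostar k lam (m - 2 * b) := by
  exact sum_choose_Qstar' k hk lam hlam hrow m b hb
end
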